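/- arXiv:2310.13884 — 11 statements merged into one kernel-verified Lean document; each statement's English description precedes it below -/
import Mathlib

section
/- Let A be an n×n real symmetric matrix and let i be an index. Then i is a neutral index of A if and only if there exists a unique real number t ≠ 0 such that i is a downer index of A + t·E_{i,i}, where E_{i,i} is the n×n matrix with a 1 in position (i,i) and 0 elsewhere. -/
open Matrix

/-- The nullity of a square real matrix: the dimension of its kernel. -/
noncomputable def nullity {V : Type*} [Fintype V] (A : Matrix V V ℝ) : ℕ :=
  Module.finrank ℝ (LinearMap.ker A.mulVecLin)

/-- The principal submatrix of `A` obtained by deleting row and column `i`. -/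
def deleteRC {V : Type*} (A : Matrix V V ℝ) (i : V) :
    Matrix {v : V // v ≠ i} {v : V // v ≠ i} ℝ :=
  A.submatrix (fun v => (v : V)) (fun v => (v : V))

/-- `A` has the `i`-strong nullity interlacing property. -/
def HasSNIP {V : Type*} [Fintype V] [DecidableEq V] (A : Matrix V V ℝ) (i : V) : Prop :=
  ∀ X : Matrix V V ℝ, X.IsSymm → A.hadamard X = 0 →
    (1 : Matrix V V ℝ).hadamard X = 0 →
    (∀ r, r ≠ i → ∀ c, (A * X) r c = 0) → X = 0

/-- `A` has the strong Arnold property. -/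
def HasSAP {V : Type*} [Fintype V] [DecidableEq V] (A : Matrix V V ℝ) : Prop :=
  ∀ X : Matrix V V ℝ, X.IsSymm → A.hadamard X = 0 →
    (1 : Matrix V V ℝ).hadamard X = 0 → A * X = 0 → X = 0

/-- `A` belongs to `𝒮(G)`. -/
def InSG {V : Type*} (G : SimpleGraph V) (A : Matrix V V ℝ) : Prop :=
  A.IsSymm ∧ ∀ u v : V, u ≠ v → (A u v ≠ 0 ↔ G.Adj u v)

/-- `(G,i)` allows the nullity pair `(k,l)`. -/
def Allows {V : Type*} [Fintype V] [DecidableEq V] (G : SimpleGraph V) (i : V)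
    (k l : ℕ) : Prop :=
  ∃ A : Matrix V V ℝ, InSG G A ∧ nullity A = k ∧ nullity (deleteRC A i) = l

/-- `(G,i)` allows the nullity pair `(k,l)` with the SNIP. -/
def AllowsSNIP {V : Type*} [Fintype V] [DecidableEq V] (G : SimpleGraph V) (i : V)
    (k l : ℕ) : Prop :=
  ∃ A : Matrix V V ℝ, InSG G A ∧ nullity A = k ∧ nullity (deleteRC A i) = l ∧ HasSNIP A i

namespace Stmt0Aux

variable {n : ℕ} (A : Matrix (Fin n) (Fin n) ℝ) (i : Fin n)

/-- The functional `x ↦ (A x) i`. -/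
noncomputable def psiL : (Fin n → ℝ) →ₗ[ℝ] ℝ := (LinearMap.proj i).comp A.mulVecLin

/-- The subspace of `x` with `(A x) j = 0` for all `j ≠ i`. -/
noncomputable def Wp : Submodule ℝ (Fin n → ℝ) :=
  LinearMap.ker ((LinearMap.funLeft ℝ ℝ (Subtype.val : {v : Fin n // v ≠ i} → Fin n)).comp
    A.mulVecLin)

lemma psiL_apply (x : Fin n → ℝ) : psiL A i x = A.mulVec x i := rfl

lemma mem_Wp {x : Fin n → ℝ} : x ∈ Wp A i ↔ ∀ j, j ≠ i → A.mulVec x j = 0 := by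
  constructor
  · intro h j hj
    have := congrFun h ⟨j, hj⟩
    simpa using this
  · intro h
    funext v
    simpa using h v.1 v.2

lemma ker_shift (t : ℝ) :
    LinearMap.ker (A + t • Matrix.single i i (1 : ℝ)).mulVecLin
      = Wp A i ⊓ LinearMap.ker (psiL A i + t • LinearMap.proj i) := by
  ext x
  have hmv : (A + t • Matrix.single i i (1 : ℝ)).mulVec x
      = fun j => A.mulVec x j + (if j = i then t * x i else 0) := by
    funext j
    simp [Matrix.add_mulVec, Matrix.smul_mulVec, Matrix.single_mulVec,
      Function.update_apply]
  constructor
  · intro h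
    have h' : ∀ j, A.mulVec x j + (if j = i then t * x i else 0) = 0 := by
      intro j
      have := congrFun (show (A + t • Matrix.single i i (1 : ℝ)).mulVec x = 0 from h) j
      rw [hmv] at this
      simpa using this
    refine ⟨(mem_Wp A i).mpr fun j hj => ?_, ?_⟩
    · have := h' j; simpa [hj] using this
    · have := h' i
      simpa [psiL_apply, LinearMap.proj_apply] using this
  · rintro ⟨hw, hk⟩
    show (A + t • Matrix.single i i (1 : ℝ)).mulVec x = 0
    rw [hmv]
    funext j
    rcases eq_or_ne j i with rfl | hj
    · simpa [psiL_apply] using hk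
    · simp [hj, (mem_Wp A i).mp hw j hj]

lemma ker_A : LinearMap.ker A.mulVecLin = Wp A i ⊓ LinearMap.ker (psiL A i) := by
  have h := ker_shift A i 0
  simpa using h

lemma deleteRC_shift (t : ℝ) :
    deleteRC (A + t • Matrix.single i i (1 : ℝ)) i = deleteRC A i := by
  ext v w
  have hv : (v : Fin n) ≠ i := v.2
  simp [deleteRC, Matrix.single, Ne.symm hv]

lemma mulVec_eq_sum (x : Fin n → ℝ) (hx : x i = 0) (v : Fin n) :
    A.mulVec x v = ∑ w : {u : Fin n // u ≠ i}, A v w.1 * x w.1 := by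
  rw [Matrix.mulVec, dotProduct]
  rw [← Finset.sum_subtype (Finset.univ \ {i}) (by simp) (fun j => A v j * x j)]
  symm
  apply Finset.sum_subset (Finset.sdiff_subset)
  intro j _ hj
  simp only [Finset.mem_sdiff, Finset.mem_univ, Finset.mem_singleton, true_and, not_not] at hj
  simp [hj, hx]

end Stmt0Aux

namespace Stmt0Aux

variable {n : ℕ} (A : Matrix (Fin n) (Fin n) ℝ) (i : Fin n)

noncomputable def extZero : ({v : Fin n // v ≠ i} → ℝ) →ₗ[ℝ] (Fin n → ℝ) :=
  Function.ExtendByZero.linearMap ℝ (Subtype.val : {v : Fin n // v ≠ i} → Fin n)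

lemma extZero_apply_mem (y : {v : Fin n // v ≠ i} → ℝ) (w : {v : Fin n // v ≠ i}) :
    extZero i y w.1 = y w := by
  simp [extZero, Function.ExtendByZero.linearMap_apply,
    Subtype.val_injective.extend_apply]

lemma extZero_apply_i (y : {v : Fin n // v ≠ i} → ℝ) : extZero i y i = 0 := by
  have h : ¬ ∃ w : {v : Fin n // v ≠ i}, (w : Fin n) = i := by
    rintro ⟨w, hw⟩; exact w.2 hw
  simp [extZero, Function.ExtendByZero.linearMap_apply, Function.extend_apply' _ _ _ h]

lemma deleteRC_mulVec (y : {v : Fin n // v ≠ i} → ℝ) (v : {v : Fin n // v ≠ i}) :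
    (deleteRC A i).mulVec y v = A.mulVec (extZero i y) v.1 := by
  rw [mulVec_eq_sum A i _ (extZero_apply_i i y)]
  rw [Matrix.mulVec, dotProduct]
  refine Finset.sum_congr rfl fun w _ => ?_
  rw [extZero_apply_mem]
  rfl

lemma nullity_deleteRC :
    nullity (deleteRC A i) = Module.finrank ℝ
      ↥(Wp A i ⊓ LinearMap.ker (LinearMap.proj (R := ℝ) (φ := fun _ : Fin n => ℝ) i)) := by
  have hF : ∀ y ∈ LinearMap.ker (deleteRC A i).mulVecLin,
      extZero i y ∈ Wp A i ⊓ LinearMap.ker (LinearMap.proj (R := ℝ) (φ := fun _ : Fin n => ℝ) i) := by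
    intro y hy
    refine ⟨(mem_Wp A i).mpr fun j hj => ?_, ?_⟩
    · have := congrFun (show (deleteRC A i).mulVec y = 0 from hy) ⟨j, hj⟩
      rw [deleteRC_mulVec A i] at this
      simpa using this
    · simpa using extZero_apply_i i y
  have hG : ∀ x ∈ Wp A i ⊓ LinearMap.ker (LinearMap.proj (R := ℝ) (φ := fun _ : Fin n => ℝ) i),
      (LinearMap.funLeft ℝ ℝ (Subtype.val : {v : Fin n // v ≠ i} → Fin n)) x
        ∈ LinearMap.ker (deleteRC A i).mulVecLin := by
    rintro x ⟨hw, hk⟩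
    have hxi : x i = 0 := hk
    show (deleteRC A i).mulVec (fun v => x v.1) = 0
    funext v
    have : (deleteRC A i).mulVec (fun w => x w.1) v = A.mulVec x v.1 := by
      rw [mulVec_eq_sum A i x hxi, Matrix.mulVec, dotProduct]
      exact Finset.sum_congr rfl fun w _ => rfl
    rw [this, (mem_Wp A i).mp hw v.1 v.2]
    rfl
  let F : ↥(LinearMap.ker (deleteRC A i).mulVecLin) →ₗ[ℝ]
      ↥(Wp A i ⊓ LinearMap.ker (LinearMap.proj (R := ℝ) (φ := fun _ : Fin n => ℝ) i)) :=
    LinearMap.codRestrict _ ((extZero i).comp (Submodule.subtype _)) (fun y => hF y.1 y.2)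
  let G : ↥(Wp A i ⊓ LinearMap.ker (LinearMap.proj (R := ℝ) (φ := fun _ : Fin n => ℝ) i)) →ₗ[ℝ]
      ↥(LinearMap.ker (deleteRC A i).mulVecLin) :=
    LinearMap.codRestrict _
      ((LinearMap.funLeft ℝ ℝ (Subtype.val : {v : Fin n // v ≠ i} → Fin n)).comp
        (Submodule.subtype _)) (fun x => hG x.1 x.2)
  have hFG : ∀ x, F (G x) = x := by
    intro x
    apply Subtype.ext
    funext j
    by_cases hj : j = i
    · subst hj
      show extZero j _ j = (x : Fin n → ℝ) j
      rw [extZero_apply_i]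
      exact (show ((x : Fin n → ℝ)) j = 0 from x.2.2).symm
    · show extZero i _ j = (x : Fin n → ℝ) j
      have := extZero_apply_mem i (fun v : {v : Fin n // v ≠ i} => (x : Fin n → ℝ) v.1) ⟨j, hj⟩
      exact this
  have hGF : ∀ y, G (F y) = y := by
    intro y
    apply Subtype.ext
    funext w
    show extZero i (y : {v : Fin n // v ≠ i} → ℝ) w.1 = (y : {v : Fin n // v ≠ i} → ℝ) w
    exact extZero_apply_mem i _ w
  let e : ↥(LinearMap.ker (deleteRC A i).mulVecLin) ≃ₗ[ℝ]
      ↥(Wp A i ⊓ LinearMap.ker (LinearMap.proj (R := ℝ) (φ := fun _ : Fin n => ℝ) i)) :=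
    LinearEquiv.ofLinear F G (LinearMap.ext hFG) (LinearMap.ext hGF)
  exact e.finrank_eq

end Stmt0Aux

namespace Stmt0Aux

variable {n : ℕ} (A : Matrix (Fin n) (Fin n) ℝ) (i : Fin n)

lemma finrank_inf_ker_add_one {M : Type*} [AddCommGroup M] [Module ℝ M]
    [FiniteDimensional ℝ M] {p : Submodule ℝ M} {f : M →ₗ[ℝ] ℝ}
    {x0 : M} (hx0 : x0 ∈ p) (hf : f x0 ≠ 0) :
    Module.finrank ℝ ↥(p ⊓ LinearMap.ker f) + 1 = Module.finrank ℝ ↥p := by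
  have h1 := (f.domRestrict p).finrank_range_add_finrank_ker
  have hsurj : LinearMap.range (f.domRestrict p) = ⊤ := by
    rw [LinearMap.range_eq_top]
    intro c
    refine ⟨⟨(c / f x0) • x0, p.smul_mem _ hx0⟩, ?_⟩
    simp [LinearMap.domRestrict_apply, div_mul_cancel₀ c hf]
  have h2 : Module.finrank ℝ ↥(LinearMap.ker (f.domRestrict p))
      = Module.finrank ℝ ↥(p ⊓ LinearMap.ker f) := by
    rw [LinearMap.ker_domRestrict, ← Submodule.finrank_map_subtype_eq p,
      Submodule.map_comap_subtype]
  rw [hsurj, finrank_top] at h1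
  rw [Module.finrank_self] at h1
  omega

lemma finrank_inf_ker_full {M : Type*} [AddCommGroup M] [Module ℝ M]
    {p : Submodule ℝ M} {f : M →ₗ[ℝ] ℝ} (h : ∀ x ∈ p, f x = 0) :
    p ⊓ LinearMap.ker f = p :=
  inf_eq_left.mpr fun x hx => LinearMap.mem_ker.mpr (h x hx)

lemma symm_pair (hA : A.IsSymm) {x y : Fin n → ℝ} (hx : x ∈ Wp A i) (hy : y ∈ Wp A i) :
    A.mulVec x i * y i = A.mulVec y i * x i := by
  have hxs : A.mulVec x = Pi.single i (A.mulVec x i) := by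
    funext j
    rcases eq_or_ne j i with rfl | hj
    · simp
    · rw [(mem_Wp A i).mp hx j hj, Pi.single_eq_of_ne hj]
  have hys : A.mulVec y = Pi.single i (A.mulVec y i) := by
    funext j
    rcases eq_or_ne j i with rfl | hj
    · simp
    · rw [(mem_Wp A i).mp hy j hj, Pi.single_eq_of_ne hj]
  have key : y ⬝ᵥ A.mulVec x = A.mulVec y ⬝ᵥ x := by
    rw [Matrix.dotProduct_mulVec, ← Matrix.vecMul_transpose, hA.eq]
  rw [hxs, hys, dotProduct_single, single_dotProduct] at key
  rw [mul_comm] at key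
  exact key

lemma exists_psi_ne (hA : A.IsSymm) (h : ∀ x ∈ Wp A i, x i = 0) :
    ∃ x ∈ Wp A i, A.mulVec x i ≠ 0 := by
  have hmem : (Pi.single i 1 : Fin n → ℝ) ∈ LinearMap.range A.mulVecLin := by
    by_contra hmem
    obtain ⟨f, hfx, hfp⟩ := Submodule.exists_dual_map_eq_bot_of_notMem hmem inferInstance
    set u : Fin n → ℝ := fun j => f (Pi.single j 1) with hu
    have hrange0 : ∀ y ∈ LinearMap.range A.mulVecLin, f y = 0 := by
      intro y hy
      have : f y ∈ (⊥ : Submodule ℝ ℝ) := hfp ▸ Submodule.mem_map_of_mem hy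
      simpa using this
    have hfrep : ∀ y : Fin n → ℝ, f y = A.mulVec y ⬝ᵥ u → True := fun _ _ => trivial
    have hfdot : ∀ y : Fin n → ℝ, f y = y ⬝ᵥ u := by
      intro y
      rw [LinearMap.pi_apply_eq_sum_univ f y, dotProduct]
      refine Finset.sum_congr rfl fun j _ => ?_
      have : (fun k => if j = k then (1:ℝ) else 0) = Pi.single j 1 := by
        funext k
        simp [Pi.single_apply, eq_comm]
      rw [this]
      simp [hu, smul_eq_mul]
    have hker : A.mulVec u = 0 := by
      funext j
      have h0 : ∀ x : Fin n → ℝ, A.mulVec u ⬝ᵥ x = 0 := by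
        intro x
        have := hrange0 (A.mulVec x) ⟨x, rfl⟩
        rw [hfdot] at this
        calc A.mulVec u ⬝ᵥ x = u ⬝ᵥ A.mulVec x := by
              rw [Matrix.dotProduct_mulVec, ← Matrix.vecMul_transpose, hA.eq,
                dotProduct_comm]
          _ = A.mulVec x ⬝ᵥ u := dotProduct_comm _ _
          _ = 0 := this
      have := h0 (Pi.single j 1)
      rwa [dotProduct_single, mul_one] at this
    have hui : u i = 0 := h u ((mem_Wp A i).mpr fun j _ => by rw [hker]; rfl)
    exact hfx (by simpa [hu] using hui)
  obtain ⟨z, hz⟩ := hmem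
  refine ⟨z, (mem_Wp A i).mpr fun j hj => ?_, ?_⟩
  · show A.mulVec z j = 0
    rw [show A.mulVec z = Pi.single i 1 from hz, Pi.single_eq_of_ne hj]
  · rw [show A.mulVec z = Pi.single i 1 from hz]
    simp

end Stmt0Aux


/-- `i` is a neutral index of a symmetric matrix `A` iff there is a unique
`t ≠ 0` such that `i` is a downer index of `A + t • E_{i,i}`. -/
theorem stmt0 {n : ℕ} (A : Matrix (Fin n) (Fin n) ℝ) (hA : A.IsSymm) (i : Fin n) :
    nullity A = nullity (deleteRC A i) ↔
      ∃! t : ℝ, t ≠ 0 ∧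
        nullity (A + t • Matrix.single i i (1 : ℝ)) =
          nullity (deleteRC (A + t • Matrix.single i i (1 : ℝ)) i) + 1 := by
  classical
  set ψ := Stmt0Aux.psiL A i with hψdef
  set ε := LinearMap.proj (R := ℝ) (φ := fun _ : Fin n => ℝ) i with hεdef
  set W := Stmt0Aux.Wp A i with hWdef
  have hN0 : nullity A = Module.finrank ℝ ↥(W ⊓ LinearMap.ker ψ) := by
    rw [nullity, Stmt0Aux.ker_A A i]
  have hNt : ∀ t : ℝ, nullity (A + t • Matrix.single i i (1 : ℝ))
      = Module.finrank ℝ ↥(W ⊓ LinearMap.ker (ψ + t • ε)) := by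
    intro t; rw [nullity, Stmt0Aux.ker_shift A i t]
  have hNdel : nullity (deleteRC A i) = Module.finrank ℝ ↥(W ⊓ LinearMap.ker ε) :=
    Stmt0Aux.nullity_deleteRC A i
  have hNdel' : ∀ t : ℝ, nullity (deleteRC (A + t • Matrix.single i i (1 : ℝ)) i)
      = Module.finrank ℝ ↥(W ⊓ LinearMap.ker ε) := by
    intro t; rw [Stmt0Aux.deleteRC_shift, hNdel]
  rw [hN0, hNdel]
  simp only [hNt, hNdel']
  set d := Module.finrank ℝ ↥W with hd
  have happ : ∀ (t : ℝ) (x : Fin n → ℝ), (ψ + t • ε) x = A.mulVec x i + t * x i := by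
    intro t x
    simp [hψdef, Stmt0Aux.psiL_apply, hεdef, smul_eq_mul]
  by_cases hε : ∀ x ∈ W, x i = 0
  · obtain ⟨x1, hx1W, hx1ψ⟩ := Stmt0Aux.exists_psi_ne A i hA hε
    have hNW : Module.finrank ℝ ↥(W ⊓ LinearMap.ker ε) = d := by
      rw [Stmt0Aux.finrank_inf_ker_full (f := ε) (fun x hx => hε x hx)]
    have hψd : Module.finrank ℝ ↥(W ⊓ LinearMap.ker ψ) + 1 = d :=
      Stmt0Aux.finrank_inf_ker_add_one hx1W (by simpa [hψdef, Stmt0Aux.psiL_apply] using hx1ψ)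
    have hψtd : ∀ t : ℝ, Module.finrank ℝ ↥(W ⊓ LinearMap.ker (ψ + t • ε)) + 1 = d := by
      intro t
      refine Stmt0Aux.finrank_inf_ker_add_one hx1W ?_
      rw [happ, hε x1 hx1W, mul_zero, add_zero]
      exact hx1ψ
    constructor
    · intro h; exfalso; omega
    · rintro ⟨t, ⟨ht0, htd⟩, _⟩; exfalso; have := hψtd t; omega
  · push_neg at hε
    obtain ⟨x0, hx0W, hx0i⟩ := hε
    have hNε : Module.finrank ℝ ↥(W ⊓ LinearMap.ker ε) + 1 = d :=
      Stmt0Aux.finrank_inf_ker_add_one hx0W hx0i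
    have hdown : ∀ t : ℝ,
        (Module.finrank ℝ ↥(W ⊓ LinearMap.ker (ψ + t • ε))
          = Module.finrank ℝ ↥(W ⊓ LinearMap.ker ε) + 1)
        ↔ ∀ x ∈ W, A.mulVec x i + t * x i = 0 := by
      intro t
      constructor
      · intro hEq
        by_contra hP
        push_neg at hP
        obtain ⟨x, hxW, hxne⟩ := hP
        have := Stmt0Aux.finrank_inf_ker_add_one hxW
          (show (ψ + t • ε) x ≠ 0 by rw [happ]; exact hxne)
        omega
      · intro hP
        rw [Stmt0Aux.finrank_inf_ker_full (fun x hx => by rw [happ]; exact hP x hx)]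
        omega
    by_cases hψ : ∀ x ∈ W, A.mulVec x i = 0
    · constructor
      · intro h
        exfalso
        rw [Stmt0Aux.finrank_inf_ker_full
          (f := ψ) (fun x hx => by rw [hψdef, Stmt0Aux.psiL_apply]; exact hψ x hx)] at h
        omega
      · rintro ⟨t, ⟨ht0, htd⟩, _⟩
        exfalso
        have h1 := (hdown t).mp htd x0 hx0W
        rw [hψ x0 hx0W, zero_add] at h1
        rcases mul_eq_zero.mp h1 with h | h
        · exact ht0 h
        · exact hx0i h
    · push_neg at hψ
      obtain ⟨x1, hx1W, hx1ψ⟩ := hψ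
      have hψx0 : A.mulVec x0 i ≠ 0 := by
        have key := Stmt0Aux.symm_pair A i hA hx1W hx0W
        have h1 : A.mulVec x1 i * x0 i ≠ 0 := mul_ne_zero hx1ψ hx0i
        rw [key] at h1
        exact left_ne_zero_of_mul h1
      have hψ1 : Module.finrank ℝ ↥(W ⊓ LinearMap.ker ψ) + 1 = d :=
        Stmt0Aux.finrank_inf_ker_add_one hx1W (by simpa [hψdef, Stmt0Aux.psiL_apply] using hx1ψ)
      constructor
      · intro _
        refine ⟨-(A.mulVec x0 i) / x0 i, ⟨?_, ?_⟩, ?_⟩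
        · exact div_ne_zero (neg_ne_zero.mpr hψx0) hx0i
        · rw [hdown]
          intro x hxW
          have key := Stmt0Aux.symm_pair A i hA hx0W hxW
          field_simp
          linarith [key]
        · rintro s ⟨hs0, hsd⟩
          have h1 := (hdown s).mp hsd x0 hx0W
          field_simp
          linarith [h1]
      · intro _
        omega
end

section
/- Let G be a simple graph on n vertices, let i be a vertex of G, and let k be a nonnegative integer. Then there exists a matrix A ∈ 𝒮(G) with i-nullity pair (k,k) if and only if there exists a matrix A' ∈ 𝒮(G) with i-nullity pair (k+1,k). -/
/-!
Changing the entry `A i i` alters neither `A(i)`, nor membership in `𝒮(G)`, nor the space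
`kerZeroAt A i` of kernel vectors vanishing at `i`. Moreover `null(A)` equals
`dim (kerZeroAt A i)` or that plus one, according as no or some kernel vector is nonzero at `i`,
and restriction embeds `kerZeroAt A i` into `ker A(i)`, onto exactly when the `i`-th row of `A`
is orthogonal to `ker A(i)`. For symmetric `A`, a kernel vector `x` with `x i ≠ 0` forces this
orthogonality, so `null(A) = null(A(i)) + 1`.

From the pair `(k+1, k)` we get such an `x`, and pairing with `x` shows that every kernel vector
of `A + t E_ii` with `t ≠ 0` vanishes at `i`: the pair becomes `(k, k)`. From `(k, k)` no such
`x` exists, so the `i`-th column lies in `(ker A(i))ᗮ = range A(i)`, say it is `A(i) y`; then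
`w = (-1, y)` is killed by every row of `A` but the `i`-th, and a suitable `t` makes
`(A + t E_ii) w = 0`: the pair becomes `(k+1, k)`.
-/

open Matrix

open Module

namespace Submodule

variable {K M : Type*} [Field K] [AddCommGroup M] [Module K M] [FiniteDimensional K M]

theorem finrank_inf_ker_add_one {P : Submodule K M} {f : M →ₗ[K] K} {x : M} (hx : x ∈ P)
    (hfx : f x ≠ 0) : finrank K ↥(P ⊓ LinearMap.ker f) + 1 = finrank K P := by
  have hrange : LinearMap.range (f ∘ₗ P.subtype) = ⊤ := by
    refine eq_top_iff.2 fun c _ => ⟨⟨(c / f x) • x, P.smul_mem _ hx⟩, ?_⟩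
    simp [hfx]
  have := LinearMap.finrank_range_add_finrank_ker (f ∘ₗ P.subtype)
  rw [hrange, finrank_top, finrank_self] at this
  rw [← map_comap_subtype, finrank_map_subtype_eq, ← LinearMap.ker_comp]
  omega

end Submodule

theorem Matrix.IsSymm.exists_mulVec_eq {ι : Type*} [Fintype ι] {B : Matrix ι ι ℝ}
    (hB : B.IsSymm) {b : ι → ℝ} (hb : ∀ z, B *ᵥ z = 0 → b ⬝ᵥ z = 0) :
    ∃ y, B *ᵥ y = b := by
  classical
  set T := toEuclideanLin B
  have hT : T.IsSymmetric := isSymmetric_toEuclideanLin_iff.2 hB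
  have hbT : WithLp.toLp 2 b ∈ (LinearMap.ker T)ᗮ := by
    refine (Submodule.mem_orthogonal' _ _).2 fun z hz => ?_
    have : B *ᵥ z.ofLp = 0 := congrArg WithLp.ofLp (LinearMap.mem_ker.1 hz)
    simpa [PiLp.inner_apply, dotProduct, mul_comm] using hb _ this
  rw [← hT.orthogonal_range, Submodule.orthogonal_orthogonal] at hbT
  obtain ⟨y, hy⟩ := hbT
  exact ⟨y.ofLp, congrArg WithLp.ofLp hy⟩

theorem Matrix.IsSymm.dotProduct_mulVec_comm {ι : Type*} [Fintype ι] {B : Matrix ι ι ℝ}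
    (hB : B.IsSymm) (x y : ι → ℝ) : x ⬝ᵥ B *ᵥ y = B *ᵥ x ⬝ᵥ y := by
  rw [dotProduct_mulVec, ← mulVec_transpose, hB]

theorem isSymm_deleteRC {V : Type*} {A : Matrix V V ℝ} (hA : A.IsSymm) (i : V) :
    (deleteRC A i).IsSymm :=
  hA.submatrix _

theorem mem_ker_mulVecLin {ι : Type*} [Fintype ι] {A : Matrix ι ι ℝ} {x : ι → ℝ} :
    x ∈ LinearMap.ker A.mulVecLin ↔ A *ᵥ x = 0 :=
  LinearMap.mem_ker

section KernelAtVertex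

variable {V : Type*} [Fintype V]

def kerZeroAt (A : Matrix V V ℝ) (i : V) : Submodule ℝ (V → ℝ) :=
  LinearMap.ker A.mulVecLin ⊓ LinearMap.ker (LinearMap.proj i)

theorem mem_kerZeroAt {A : Matrix V V ℝ} {i : V} {x : V → ℝ} :
    x ∈ kerZeroAt A i ↔ A *ᵥ x = 0 ∧ x i = 0 :=
  Iff.rfl

theorem finrank_kerZeroAt_add_one {A : Matrix V V ℝ} {i : V} {x : V → ℝ} (hx : A *ᵥ x = 0)
    (hxi : x i ≠ 0) :
    finrank ℝ (kerZeroAt A i) + 1 = nullity A :=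
  Submodule.finrank_inf_ker_add_one (P := LinearMap.ker A.mulVecLin) (f := LinearMap.proj i)
    (mem_ker_mulVecLin.2 hx) hxi

theorem finrank_kerZeroAt_eq_nullity {A : Matrix V V ℝ} {i : V}
    (h : ∀ x, A *ᵥ x = 0 → x i = 0) :
    finrank ℝ (kerZeroAt A i) = nullity A := by
  rw [kerZeroAt, inf_eq_left.2 fun x hx => h x hx]
  rfl

variable [DecidableEq V]

theorem mulVec_apply_eq_add_sum_ne (A : Matrix V V ℝ) (x : V → ℝ) (i v : V) :
    (A *ᵥ x) v = A v i * x i + ∑ s : {u // u ≠ i}, A v s * x s :=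
  Fintype.sum_eq_add_sum_subtype_ne _ i

theorem deleteRC_mulVec_apply (A : Matrix V V ℝ) (i : V) (x : V → ℝ) (s : {v // v ≠ i}) :
    (deleteRC A i *ᵥ (x ∘ Subtype.val)) s = (A *ᵥ x) s - A s i * x i := by
  rw [mulVec_apply_eq_add_sum_ne A x i]
  simp [deleteRC, mulVec, dotProduct]

def restrictKerZeroAt (A : Matrix V V ℝ) (i : V) :
    kerZeroAt A i →ₗ[ℝ] LinearMap.ker (deleteRC A i).mulVecLin :=
  LinearMap.codRestrict _ (LinearMap.funLeft ℝ ℝ Subtype.val ∘ₗ (kerZeroAt A i).subtype)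
    fun x => by
      obtain ⟨hAx, hxi⟩ := mem_kerZeroAt.1 x.2
      ext s
      simp [LinearMap.funLeft, deleteRC_mulVec_apply, hAx, hxi]

theorem restrictKerZeroAt_injective (A : Matrix V V ℝ) (i : V) :
    Function.Injective (restrictKerZeroAt A i) := by
  refine (injective_iff_map_eq_zero _).2 fun x hx => Subtype.ext (funext fun v => ?_)
  by_cases hv : v = i
  · exact hv ▸ (mem_kerZeroAt.1 x.2).2
  · exact congrFun (congrArg Subtype.val hx) ⟨v, hv⟩

theorem restrictKerZeroAt_surjective_iff (A : Matrix V V ℝ) (i : V) :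
    Function.Surjective (restrictKerZeroAt A i) ↔
      ∀ z, deleteRC A i *ᵥ z = 0 → (fun s : {v // v ≠ i} => A i s) ⬝ᵥ z = 0 := by
  constructor
  · intro h z hz
    obtain ⟨⟨x, hx⟩, hxz⟩ := h ⟨z, hz⟩
    obtain rfl : x ∘ Subtype.val = z := congrArg Subtype.val hxz
    obtain ⟨hAx, hxi⟩ := mem_kerZeroAt.1 hx
    have hi := mulVec_apply_eq_add_sum_ne A x i i
    rw [hAx, hxi, mul_zero, zero_add] at hi
    exact hi.symm
  · intro h z
    have hz : deleteRC A i *ᵥ z.1 = 0 := mem_ker_mulVecLin.1 z.2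
    set x : V → ℝ := fun v => if hv : v = i then 0 else z.1 ⟨v, hv⟩
    have hxi : x i = 0 := dif_pos rfl
    have hxz : x ∘ Subtype.val = z.1 := funext fun s => dif_neg s.2
    have hAx : A *ᵥ x = 0 := by
      funext v
      by_cases hv : v = i
      · subst hv
        rw [mulVec_apply_eq_add_sum_ne A x v v, hxi, mul_zero, zero_add]
        simpa [dotProduct, ← hxz] using h z.1 hz
      · have := deleteRC_mulVec_apply A i x ⟨v, hv⟩
        rwa [hxz, hz, hxi, mul_zero, sub_zero, eq_comm] at this
    exact ⟨⟨x, mem_kerZeroAt.2 ⟨hAx, hxi⟩⟩, Subtype.ext hxz⟩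

end KernelAtVertex

section Nullity

variable {V : Type*} [Fintype V] [DecidableEq V] {A : Matrix V V ℝ} {i : V}

theorem finrank_kerZeroAt_le_nullity_deleteRC (A : Matrix V V ℝ) (i : V) :
    finrank ℝ (kerZeroAt A i) ≤ nullity (deleteRC A i) :=
  LinearMap.finrank_le_finrank_of_injective (restrictKerZeroAt_injective A i)

theorem finrank_kerZeroAt_eq_nullity_deleteRC_iff :
    finrank ℝ (kerZeroAt A i) = nullity (deleteRC A i) ↔
      ∀ z, deleteRC A i *ᵥ z = 0 → (fun s : {v // v ≠ i} => A i s) ⬝ᵥ z = 0 := by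
  rw [← restrictKerZeroAt_surjective_iff]
  exact ⟨fun h => (LinearMap.injective_iff_surjective_of_finrank_eq_finrank h).1
      (restrictKerZeroAt_injective A i),
    fun h => (LinearEquiv.ofBijective _ ⟨restrictKerZeroAt_injective A i, h⟩).finrank_eq⟩

theorem exists_mulVec_eq_zero_apply_ne_zero (h : nullity (deleteRC A i) < nullity A) :
    ∃ x, A *ᵥ x = 0 ∧ x i ≠ 0 := by
  by_contra! hvan
  have := finrank_kerZeroAt_le_nullity_deleteRC A i
  rw [finrank_kerZeroAt_eq_nullity hvan] at this
  omega

theorem dotProduct_row_eq_zero_of_mulVec_eq_zero (hA : A.IsSymm) {x : V → ℝ}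
    (hx : A *ᵥ x = 0) (hxi : x i ≠ 0) {z : {v // v ≠ i} → ℝ}
    (hz : deleteRC A i *ᵥ z = 0) :
    (fun s : {v // v ≠ i} => A i s) ⬝ᵥ z = 0 := by
  have hBx : deleteRC A i *ᵥ (x ∘ Subtype.val) = -x i • fun s : {v // v ≠ i} => A i s := by
    funext s
    rw [deleteRC_mulVec_apply, hx, hA.apply]
    simp [mul_comm]
  have key : x i * ((fun s : {v // v ≠ i} => A i s) ⬝ᵥ z) = 0 := by
    calc x i * ((fun s : {v // v ≠ i} => A i s) ⬝ᵥ z)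
        = -(deleteRC A i *ᵥ (x ∘ Subtype.val) ⬝ᵥ z) := by rw [hBx, neg_smul, neg_dotProduct,
          smul_dotProduct, smul_eq_mul, neg_neg]
      _ = -((x ∘ Subtype.val) ⬝ᵥ deleteRC A i *ᵥ z) := by
          rw [(isSymm_deleteRC hA i).dotProduct_mulVec_comm]
      _ = 0 := by rw [hz, dotProduct_zero, neg_zero]
  exact (mul_eq_zero.1 key).resolve_left hxi

theorem nullity_eq_nullity_deleteRC_add_one (hA : A.IsSymm) {x : V → ℝ} (hx : A *ᵥ x = 0)
    (hxi : x i ≠ 0) : nullity A = nullity (deleteRC A i) + 1 := by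
  rw [← finrank_kerZeroAt_add_one hx hxi, finrank_kerZeroAt_eq_nullity_deleteRC_iff.2
    fun z hz => dotProduct_row_eq_zero_of_mulVec_eq_zero hA hx hxi hz]

end Nullity

section DiagonalPerturbation

variable {V : Type*} [DecidableEq V] {A : Matrix V V ℝ} {i : V}

theorem deleteRC_add_single (A : Matrix V V ℝ) (i : V) (t : ℝ) :
    deleteRC (A + single i i t) i = deleteRC A i := by
  ext s s'
  simp [deleteRC, single_apply_of_ne, s.2.symm]

theorem isSymm_single_self (i : V) (t : ℝ) : (single i i t).IsSymm :=
  IsSymm.ext fun u v => by simp [single_apply, and_comm]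

theorem InSG.add_single {G : SimpleGraph V} (hA : InSG G A) (i : V) (t : ℝ) :
    InSG G (A + single i i t) := by
  refine ⟨hA.1.add (isSymm_single_self i t), fun u v huv => ?_⟩
  have hzero : single i i t u v = 0 :=
    single_apply_of_ne _ _ _ _ _ fun h => huv (h.1.symm.trans h.2)
  simpa [hzero] using hA.2 u v huv

variable [Fintype V]

theorem add_single_mulVec (A : Matrix V V ℝ) (i : V) (t : ℝ) (x : V → ℝ) :
    (A + single i i t) *ᵥ x = A *ᵥ x + Pi.single i (t * x i) := by
  rw [add_mulVec, single_mulVec]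
  rfl

theorem kerZeroAt_add_single (A : Matrix V V ℝ) (i : V) (t : ℝ) :
    kerZeroAt (A + single i i t) i = kerZeroAt A i := by
  ext x
  simp only [mem_kerZeroAt, add_single_mulVec]
  constructor <;> rintro ⟨hx, hxi⟩ <;> simp_all

theorem exists_mulVec_add_single_eq_zero {y : {v // v ≠ i} → ℝ}
    (hy : deleteRC A i *ᵥ y = fun s : {v // v ≠ i} => A s i) :
    ∃ t w, (A + single i i t) *ᵥ w = 0 ∧ w i ≠ 0 := by
  set w : V → ℝ := fun v => if hv : v = i then -1 else y ⟨v, hv⟩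
  have hwi : w i = -1 := dif_pos rfl
  have hwy : w ∘ Subtype.val = y := funext fun s => dif_neg s.2
  have hAw : ∀ s : {v // v ≠ i}, (A *ᵥ w) s = 0 := fun s => by
    have := deleteRC_mulVec_apply A i w s
    rw [hwy, hy, hwi] at this
    linarith
  refine ⟨(A *ᵥ w) i, w, funext fun v => ?_, by simp [hwi]⟩
  rw [add_single_mulVec]
  by_cases hv : v = i
  · subst hv
    simp [hwi]
  · simp [hv, hAw ⟨v, hv⟩]

theorem exists_nullity_add_single_eq_add_one (hA : A.IsSymm)
    (h : nullity A = nullity (deleteRC A i)) :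
    ∃ t, nullity (A + single i i t) = nullity A + 1 := by
  have hvan : ∀ x, A *ᵥ x = 0 → x i = 0 := fun x hx => by
    by_contra hxi
    have := nullity_eq_nullity_deleteRC_add_one hA hx hxi
    omega
  have hrow := finrank_kerZeroAt_eq_nullity_deleteRC_iff.1
    ((finrank_kerZeroAt_eq_nullity hvan).trans h)
  obtain ⟨y, hy⟩ := (isSymm_deleteRC hA i).exists_mulVec_eq hrow
  obtain ⟨t, w, hw, hwi⟩ := exists_mulVec_add_single_eq_zero
    (hy.trans (funext fun s => hA.apply s i))
  refine ⟨t, ?_⟩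
  rw [← finrank_kerZeroAt_add_one hw hwi, kerZeroAt_add_single,
    finrank_kerZeroAt_eq_nullity hvan]

theorem nullity_add_single_eq_nullity_deleteRC (hA : A.IsSymm)
    (h : nullity A = nullity (deleteRC A i) + 1) {t : ℝ} (ht : t ≠ 0) :
    nullity (A + single i i t) = nullity (deleteRC A i) := by
  obtain ⟨x, hx, hxi⟩ := exists_mulVec_eq_zero_apply_ne_zero (A := A) (i := i) (by omega)
  have hvan : ∀ w, (A + single i i t) *ᵥ w = 0 → w i = 0 := fun w hw => by
    have key : x ⬝ᵥ (A + single i i t) *ᵥ w = x i * (t * w i) := by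
      rw [add_single_mulVec, dotProduct_add, hA.dotProduct_mulVec_comm, hx,
        zero_dotProduct, zero_add, dotProduct_single]
    rw [hw, dotProduct_zero] at key
    simpa [hxi, ht] using key.symm
  have := finrank_kerZeroAt_add_one hx hxi
  rw [← finrank_kerZeroAt_eq_nullity hvan, kerZeroAt_add_single]
  omega

end DiagonalPerturbation

/-- `(G,i)` realizes the nullity pair `(k,k)` iff it realizes `(k+1,k)`. -/
theorem stmt1 {n : ℕ} (G : SimpleGraph (Fin n)) (i : Fin n) (k : ℕ) :
    (∃ A : Matrix (Fin n) (Fin n) ℝ, InSG G A ∧ nullity A = k ∧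
        nullity (deleteRC A i) = k) ↔
      (∃ A' : Matrix (Fin n) (Fin n) ℝ, InSG G A' ∧ nullity A' = k + 1 ∧
        nullity (deleteRC A' i) = k) := by
  constructor
  · rintro ⟨A, hA, hnull, hdel⟩
    obtain ⟨t, ht⟩ := exists_nullity_add_single_eq_add_one hA.1 (hnull.trans hdel.symm)
    exact ⟨A + single i i t, hA.add_single i t, hnull ▸ ht,
      (deleteRC_add_single A i t).symm ▸ hdel⟩
  · rintro ⟨A, hA, hnull, hdel⟩
    exact ⟨A + single i i 1, hA.add_single i 1,
      (nullity_add_single_eq_nullity_deleteRC hA.1 (hdel ▸ hnull) one_ne_zero).trans hdel,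
      (deleteRC_add_single A i 1).symm ▸ hdel⟩
end

section
/- Every nonsingular n×n real symmetric matrix A has the i-SNIP for every index i ∈ {1,…,n}. -/
open Matrix

/-- every nonsingular real symmetric matrix has the `i`-SNIP for each `i`. -/
theorem stmt2 {n : ℕ} (A : Matrix (Fin n) (Fin n) ℝ) (hA : A.IsSymm)
    (hdet : A.det ≠ 0) (i : Fin n) : HasSNIP A i := by
  intro X hX hAX hIX hrow
  have hinv : A⁻¹ * (A * X) = X := by
    rw [← mul_assoc, Matrix.nonsing_inv_mul A (isUnit_iff_ne_zero.mpr hdet), one_mul]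
  have hentry : ∀ r c, X r c = A⁻¹ r i * (A * X) i c := by
    intro r c
    have h := congrFun (congrFun hinv r) c
    rw [← h, Matrix.mul_apply]
    rw [Finset.sum_eq_single i]
    · intro b _ hb
      rw [hrow b hb c, mul_zero]
    · intro h'; exact absurd (Finset.mem_univ i) h'
  have hdiag : ∀ r, X r r = 0 := by
    intro r
    have h := congrFun (congrFun hIX r) r
    simpa [Matrix.hadamard_apply] using h
  have hsym : ∀ r c, X c r = X r c := fun r c => congrFun (congrFun hX r) c
  ext r c
  have key : X r c * X c r = X r r * X c c := by
    rw [hentry r c, hentry c r, hentry r r, hentry c c]; ring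
  rw [hsym r c, hdiag r, hdiag c, zero_mul] at key
  simpa using mul_self_eq_zero.mp key
end

section
/- Let A be an n×n real symmetric matrix and i ∈ {1,…,n}. If the principal submatrix A(i) obtained by deleting row and column i of A is nonsingular, then A has the i-SNIP. -/
open Matrix

/-- if `A(i)` is nonsingular, then `A` has the `i`-SNIP. -/
theorem stmt3 {n : ℕ} (A : Matrix (Fin n) (Fin n) ℝ) (hA : A.IsSymm) (i : Fin n)
    (hdet : (deleteRC A i).det ≠ 0) : HasSNIP A i := by
  intro X hX h1 h2 h3
  have hdiag : ∀ v, X v v = 0 := by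
    intro v
    have := congrFun (congrFun h2 v) v
    simpa [Matrix.hadamard] using this
  have hinj : Function.Injective (deleteRC A i).mulVec :=
    mulVec_injective_iff_isUnit.2 ((isUnit_iff_isUnit_det _).2 (isUnit_iff_ne_zero.2 hdet))
  -- key: if X i c = 0 then column c of X restricted off i is zero
  have key : ∀ c : Fin n, X i c = 0 → ∀ v : Fin n, v ≠ i → X v c = 0 := by
    intro c hic v hv
    have hy : (deleteRC A i).mulVec (fun v : {v : Fin n // v ≠ i} => X v c) = 0 := by
      funext r
      have hfull : ∑ v : Fin n, A r v * X v c = 0 := h3 r r.2 c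
      have hsplit : ∑ v : Fin n, A r v * X v c
          = A r i * X i c + ∑ v ∈ ({i}ᶜ : Finset (Fin n)), A r v * X v c :=
        Fintype.sum_eq_add_sum_compl i _
      have hsub : ∑ v ∈ ({i}ᶜ : Finset (Fin n)), A r v * X v c
          = ∑ v : {v : Fin n // v ≠ i}, A r v * X v c := by
        rw [← Finset.sum_subtype ({i}ᶜ : Finset (Fin n)) (by simp) (fun v => A r v * X v c)]
      show ∑ v : {v : Fin n // v ≠ i}, deleteRC A i r v * X v c = 0
      have : ∑ v : {v : Fin n // v ≠ i}, A (r : Fin n) v * X v c = 0 := by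
        rw [← hsub]
        have := hsplit
        rw [hic, mul_zero, zero_add] at this
        rw [← this, hfull]
      simpa [deleteRC] using this
    have h0 : (fun v : {v : Fin n // v ≠ i} => X v c) = 0 :=
      hinj (hy.trans (Matrix.mulVec_zero _).symm)
    exact congrFun h0 ⟨v, hv⟩
  -- column i of X is zero
  have hcoli : ∀ v, X v i = 0 := by
    intro v
    rcases eq_or_ne v i with rfl | hv
    · exact hdiag v
    · exact key i (hdiag i) v hv
  have hrowi : ∀ c, X i c = 0 := by
    intro c
    have := congrFun (congrFun hX c) i
    simp only [Matrix.transpose_apply] at this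
    rw [this]
    exact hcoli c
  funext r c
  rcases eq_or_ne r i with rfl | hr
  · exact hrowi c
  · exact key c (hrowi c) r hr
end

section
/- Let A be an n×n real symmetric matrix, i ∈ {1,…,n}, and let B be an m×m real symmetric matrix. Then the block-diagonal direct sum A ⊕ B (an (n+m)×(n+m) symmetric matrix, with the index i lying in the block of A) has the i-SNIP if and only if A has the i-SNIP and B is nonsingular. -/
open Matrix

lemma exists_good_w {n : ℕ} (A : Matrix (Fin n) (Fin n) ℝ) (i : Fin n) :
    ∃ w : Fin n → ℝ, w ≠ 0 ∧ ∀ r, r ≠ i → A.mulVec w r = 0 := by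
  by_cases hAdet : A.det = 0
  · obtain ⟨w, hw0, hw⟩ := Matrix.exists_mulVec_eq_zero_iff.mpr hAdet
    exact ⟨w, hw0, fun r _ => congrFun hw r⟩
  · refine ⟨A⁻¹.mulVec (Pi.single i 1), ?_, ?_⟩
    · intro h
      have h2 : A.mulVec (A⁻¹.mulVec (Pi.single i 1)) = Pi.single i 1 := by
        rw [Matrix.mulVec_mulVec, Matrix.mul_nonsing_inv A (isUnit_iff_ne_zero.mpr hAdet),
          Matrix.one_mulVec]
      rw [h, Matrix.mulVec_zero] at h2
      have := congrFun h2 i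
      simp at this
    · intro r hr
      rw [Matrix.mulVec_mulVec, Matrix.mul_nonsing_inv A (isUnit_iff_ne_zero.mpr hAdet),
        Matrix.one_mulVec]
      exact Pi.single_eq_of_ne hr 1


/-- `A ⊕ B` has the `i`-SNIP iff `A` has the `i`-SNIP and `B` is nonsingular. -/
theorem stmt4 {n m : ℕ} (A : Matrix (Fin n) (Fin n) ℝ) (hA : A.IsSymm) (i : Fin n)
    (B : Matrix (Fin m) (Fin m) ℝ) (hB : B.IsSymm) :
    HasSNIP (Matrix.fromBlocks A 0 0 B) (Sum.inl i) ↔ HasSNIP A i ∧ B.det ≠ 0 := by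
  constructor
  · intro hM
    constructor
    · -- A has SNIP
      intro X hXs h1 h2 h3
      have hX' := hM (Matrix.fromBlocks X 0 0 0) ?_ ?_ ?_ ?_
      · ext a b
        have := congrFun (congrFun hX' (Sum.inl a)) (Sum.inl b)
        simpa using this
      · show _ = _
        rw [Matrix.fromBlocks_transpose, hXs.eq]
        simp
      · ext r c
        cases r with
        | inl a =>
          cases c with
          | inl b =>
            have := congrFun (congrFun h1 a) b
            simpa [Matrix.hadamard_apply] using this
          | inr b => simp [Matrix.hadamard_apply]
        | inr a => cases c <;> simp [Matrix.hadamard_apply]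
      · ext r c
        cases r with
        | inl a =>
          cases c with
          | inl b =>
            have := congrFun (congrFun h2 a) b
            simpa [Matrix.hadamard_apply, Matrix.one_apply] using this
          | inr b => simp [Matrix.hadamard_apply]
        | inr a => cases c <;> simp [Matrix.hadamard_apply]
      · intro r hr c
        rw [Matrix.fromBlocks_multiply]
        cases r with
        | inl a =>
          have ha : a ≠ i := fun h => hr (by rw [h])
          cases c with
          | inl b => simpa using h3 a ha b
          | inr b => simp
        | inr a => cases c <;> simp
    · -- B nonsingular
      intro hdet
      obtain ⟨v, hv0, hv⟩ := Matrix.exists_mulVec_eq_zero_iff.mpr hdet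
      obtain ⟨w, hw0, hAw⟩ := exists_good_w A i
      set Q : Matrix (Fin n) (Fin m) ℝ := Matrix.of (fun a b => w a * v b) with hQ
      set R : Matrix (Fin m) (Fin n) ℝ := Matrix.of (fun a b => v a * w b) with hR
      have hX := hM (Matrix.fromBlocks 0 Q R 0) ?_ ?_ ?_ ?_
      · obtain ⟨a, ha⟩ := Function.ne_iff.mp hw0
        obtain ⟨b, hb⟩ := Function.ne_iff.mp hv0
        have := congrFun (congrFun hX (Sum.inl a)) (Sum.inr b)
        simp [hQ] at this
        rcases this with h | h
        · exact ha h
        · exact hb h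
      · show _ = _
        ext r c
        cases r <;> cases c <;> simp [hQ, hR, mul_comm]
      · ext r c
        cases r <;> cases c <;> simp [Matrix.hadamard_apply]
      · ext r c
        cases r <;> cases c <;> simp [Matrix.hadamard_apply, Matrix.one_apply]
      · intro r hr c
        rw [Matrix.fromBlocks_multiply]
        cases r with
        | inl a =>
          have ha : a ≠ i := fun h => hr (by rw [h])
          cases c with
          | inl b => simp
          | inr b =>
            have key : (A * Q) a b = A.mulVec w a * v b := by
              rw [Matrix.mul_apply, Matrix.mulVec, dotProduct, Finset.sum_mul]
              exact Finset.sum_congr rfl fun k _ => by simp [hQ]; ring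
            simp [key, hAw a ha]
        | inr a =>
          cases c with
          | inl b =>
            have key : (B * R) a b = B.mulVec v a * w b := by
              rw [Matrix.mul_apply, Matrix.mulVec, dotProduct, Finset.sum_mul]
              exact Finset.sum_congr rfl fun k _ => by simp [hR]; ring
            simp [key, hv]
          | inr b => simp
  · rintro ⟨hAS, hBdet⟩ X hXs h1 h2 h3
    have hBu : IsUnit B.det := isUnit_iff_ne_zero.mpr hBdet
    -- Step 1: rows indexed by inr are zero
    have step1 : ∀ a c, X (Sum.inr a) c = 0 := by
      intro a c
      have hu : B.mulVec (fun k => X (Sum.inr k) c) = 0 := by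
        ext j
        have := h3 (Sum.inr j) (by simp) c
        rw [Matrix.mul_apply, Fintype.sum_sum_type] at this
        simpa [Matrix.mulVec, dotProduct] using this
      have := congrArg (B⁻¹.mulVec) hu
      rw [Matrix.mulVec_mulVec, Matrix.nonsing_inv_mul B hBu, Matrix.one_mulVec,
        Matrix.mulVec_zero] at this
      exact congrFun this a
    have step2 : ∀ a b, X (Sum.inl a) (Sum.inr b) = 0 := by
      intro a b
      have := congrFun (congrFun hXs.eq (Sum.inl a)) (Sum.inr b)
      rw [Matrix.transpose_apply] at this
      rw [← this]
      exact step1 b (Sum.inl a)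
    -- Step 3: apply SNIP of A
    have hX1 := hAS (Matrix.of (fun a b => X (Sum.inl a) (Sum.inl b))) ?_ ?_ ?_ ?_
    · ext r c
      cases r with
      | inl a =>
        cases c with
        | inl b =>
          have := congrFun (congrFun hX1 a) b
          simpa using this
        | inr b => simpa using step2 a b
      | inr a => simpa using step1 a c
    · show _ = _
      ext a b
      have := congrFun (congrFun hXs.eq (Sum.inl a)) (Sum.inl b)
      rw [Matrix.transpose_apply] at this
      simpa using this
    · ext a b
      have := congrFun (congrFun h1 (Sum.inl a)) (Sum.inl b)
      simpa [Matrix.hadamard_apply] using this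
    · ext a b
      have := congrFun (congrFun h2 (Sum.inl a)) (Sum.inl b)
      simpa [Matrix.hadamard_apply, Matrix.one_apply] using this
    · intro r hr c
      have := h3 (Sum.inl r) (by simpa using hr) (Sum.inl c)
      rw [Matrix.mul_apply, Fintype.sum_sum_type] at this
      simpa [Matrix.mul_apply] using this
end

section
/- Let A be an n×n real symmetric matrix and i ∈ {1,…,n}. If A has the i-SNIP, then both A and the principal submatrix A(i) (obtained by deleting row and column i) have the SAP. -/
open Matrix

/-- if `A` has the `i`-SNIP, then both `A` and `A(i)` have the SAP. -/
theorem stmt5 {n : ℕ} (A : Matrix (Fin n) (Fin n) ℝ) (hA : A.IsSymm) (i : Fin n)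
    (h : HasSNIP A i) : HasSAP A ∧ HasSAP (deleteRC A i) := by
  constructor
  · intro X hsymm hAX hIX hmul
    exact h X hsymm hAX hIX (fun r _ c => by rw [hmul]; rfl)
  · intro X' hsymm hAX hIX hmul
    -- extend X' by zeros to an n×n matrix
    set X : Matrix (Fin n) (Fin n) ℝ := fun u v =>
      if hu : u = i then 0 else if hv : v = i then 0 else X' ⟨u, hu⟩ ⟨v, hv⟩ with hXdef
    have hXi : ∀ v, X i v = 0 := fun v => by simp [hXdef]
    have hXci : ∀ u, X u i = 0 := fun u => by
      by_cases hu : u = i <;> simp [hXdef, hu]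
    have hXe : ∀ (u v : Fin n) (hu : u ≠ i) (hv : v ≠ i),
        X u v = X' ⟨u, hu⟩ ⟨v, hv⟩ := fun u v hu hv => by simp [hXdef, hu, hv]
    have hX0 : X = 0 := by
      apply h X
      · ext u v
        by_cases hu : u = i
        · subst hu
          simp only [transpose_apply, hXci, hXi]
        · by_cases hv : v = i
          · subst hv
            simp only [transpose_apply, hXi, hXci]
          · have := congrFun (congrFun hsymm ⟨v, hv⟩) ⟨u, hu⟩
            simp only [transpose_apply] at this ⊢
            rw [hXe v u hv hu, hXe u v hu hv]
            exact this.symm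
      · ext u v
        by_cases hu : u = i
        · subst hu; simp [Matrix.hadamard_apply, hXi]
        · by_cases hv : v = i
          · subst hv; simp [Matrix.hadamard_apply, hXci]
          · have := congrFun (congrFun hAX ⟨u, hu⟩) ⟨v, hv⟩
            simp only [Matrix.hadamard_apply, Matrix.zero_apply] at this ⊢
            rw [hXe u v hu hv]
            exact this
      · ext u v
        by_cases hu : u = i
        · subst hu; simp [Matrix.hadamard_apply, hXi]
        · by_cases hv : v = i
          · subst hv; simp [Matrix.hadamard_apply, hXci]
          · by_cases huv : u = v
            · subst huv
              have := congrFun (congrFun hIX ⟨u, hu⟩) ⟨u, hu⟩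
              simp only [Matrix.hadamard_apply, Matrix.one_apply_eq, one_mul,
                Matrix.zero_apply] at this
              simp [Matrix.hadamard_apply, hXe u u hu hu, this]
            · simp [Matrix.hadamard_apply, Matrix.one_apply, huv]
      · intro r hr c
        rw [Matrix.mul_apply]
        by_cases hc : c = i
        · subst hc
          exact Finset.sum_eq_zero fun k _ => by rw [hXci k, mul_zero]
        · have key : ∑ k : Fin n, A r k * X k c
              = ∑ k : {v : Fin n // v ≠ i}, A r (k : Fin n) * X (k : Fin n) c := by
            rw [← Finset.sum_subtype (Finset.univ.erase i)
              (fun x => by simp [Finset.mem_erase]) (fun k => A r k * X k c)]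
            rw [← Finset.add_sum_erase Finset.univ _ (Finset.mem_univ i),
              hXi c, mul_zero, zero_add]
          rw [key]
          have := congrFun (congrFun hmul ⟨r, hr⟩) ⟨c, hc⟩
          rw [Matrix.mul_apply] at this
          simp only [Matrix.zero_apply] at this
          rw [← this]
          apply Finset.sum_congr rfl
          intro k _
          rw [hXe (k : Fin n) c k.2 hc]
          rfl
    ext u v
    have := congrFun (congrFun hX0 (u : Fin n)) (v : Fin n)
    rw [hXe (u : Fin n) (v : Fin n) u.2 v.2] at this
    simpa using this
end

section
/- Let A be an n×n real symmetric matrix and i ∈ {1,…,n}. Then for every real number t, A has the i-SNIP if and only if A + t·E_{i,i} has the i-SNIP, where E_{i,i} is the matrix with a 1 in position (i,i) and 0 elsewhere. -/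
open Matrix

lemma snip_aux {n : ℕ} (A : Matrix (Fin n) (Fin n) ℝ) (i : Fin n) (t : ℝ)
    (h : HasSNIP A i) :
    HasSNIP (A + t • Matrix.single i i (1 : ℝ)) i := by
  intro X hsym hH hI hrows
  have hXii : X i i = 0 := by
    have := congrFun (congrFun hI i) i
    simpa [Matrix.hadamard] using this
  have hE : (Matrix.single i i (1 : ℝ)).hadamard X = 0 := by
    ext a b
    by_cases ha : a = i <;> by_cases hb : b = i <;>
      simp_all [Matrix.hadamard, Matrix.single, hXii, eq_comm]
  apply h X hsym
  · have : A.hadamard X + t • (Matrix.single i i (1 : ℝ)).hadamard X = 0 := by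
      rw [← Matrix.smul_hadamard, ← Matrix.add_hadamard]; exact hH
    rw [hE] at this; simpa using this
  · exact hI
  · intro r hr c
    have h1 := hrows r hr c
    have h2 : ((Matrix.single i i (1 : ℝ)) * X) r c = 0 := by
      simp [Matrix.mul_apply, Matrix.single, Finset.sum_ite_eq,
        (Ne.symm hr : i ≠ r)]
    rw [Matrix.add_mul, Matrix.smul_mul] at h1
    simpa [h2] using h1

/-- for every real `t`, `A` has the `i`-SNIP iff `A + t • E_{i,i}` does. -/
theorem stmt6 {n : ℕ} (A : Matrix (Fin n) (Fin n) ℝ) (hA : A.IsSymm) (i : Fin n)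
    (t : ℝ) :
    HasSNIP A i ↔ HasSNIP (A + t • Matrix.single i i (1 : ℝ)) i := by
  constructor
  · exact snip_aux A i t
  · intro h
    have := snip_aux _ i (-t) h
    have heq : A + t • Matrix.single i i (1 : ℝ) +
        (-t) • Matrix.single i i (1 : ℝ) = A := by
      rw [add_assoc, ← add_smul]; simp
    rwa [heq] at this
end

section
/- Let A be an n×n real symmetric matrix and i ∈ {1,…,n}. Then: (a) if i is a downer index of A, then A has the i-SNIP if and only if A has the SAP; (b) if i is a neutral index of A and t is the unique nonzero real number such that i is a downer index of A + t·E_{i,i}, then A has the i-SNIP if and only if A + t·E_{i,i} has the SAP; (c) if i is an upper index of A, then A has the i-SNIP if and only if A(i) has the SAP. -/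
open Matrix

section Helpers
variable {V : Type*} [Fintype V] [DecidableEq V]

lemma sum_split (i : V) (f : V → ℝ) :
    ∑ j, f j = f i + ∑ j : {v : V // v ≠ i}, f ↑j := by
  rw [← Finset.add_sum_erase _ f (Finset.mem_univ i)]
  congr 1
  exact Finset.sum_subtype _ (fun x => by simp [Finset.mem_erase]) f

/-- downer: a kernel vector with nonzero i-th entry exists -/
lemma ker_vec_of_lt (A : Matrix V V ℝ) (i : V)
    (h : nullity (deleteRC A i) < nullity A) :
    ∃ v, A.mulVec v = 0 ∧ v i ≠ 0 := by
  by_contra hc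
  push_neg at hc
  have hmap : ∀ v ∈ LinearMap.ker A.mulVecLin,
      (LinearMap.funLeft ℝ ℝ (Subtype.val : {v : V // v ≠ i} → V)) v ∈
        LinearMap.ker (deleteRC A i).mulVecLin := by
    intro v hv
    rw [LinearMap.mem_ker] at hv ⊢
    have hv0 : A.mulVec v = 0 := by simpa using hv
    have hvi : v i = 0 := hc v hv0
    funext j
    have h1 : (A.mulVec v) ↑j = 0 := congrFun hv0 ↑j
    simp only [Matrix.mulVec, dotProduct] at h1
    rw [sum_split i] at h1
    simp only [Matrix.mulVecLin_apply, Matrix.mulVec, dotProduct, deleteRC,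
      Matrix.submatrix_apply, LinearMap.funLeft_apply, Function.comp, Pi.zero_apply]
    rw [hvi, mul_zero, zero_add] at h1
    exact h1
  set f := (LinearMap.funLeft ℝ ℝ (Subtype.val : {v : V // v ≠ i} → V)).restrict hmap with hf
  have hinj : Function.Injective f := by
    rw [injective_iff_map_eq_zero]
    intro x hx
    have hx' : (LinearMap.funLeft ℝ ℝ (Subtype.val : {v : V // v ≠ i} → V)) (x : V → ℝ) = 0 :=
      congrArg Subtype.val hx
    have hxi : (x : V → ℝ) i = 0 := hc x ((Matrix.mulVecLin_apply A (x : V → ℝ)).symm.trans (LinearMap.map_coe_ker _ x))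
    ext v
    by_cases hv : v = i
    · subst hv; exact hxi
    · exact congrFun hx' ⟨v, hv⟩
  have := LinearMap.finrank_le_finrank_of_injective hinj
  unfold nullity at h
  omega

/-- extension by zero linear map -/
def extMap (i : V) : ({v : V // v ≠ i} → ℝ) →ₗ[ℝ] (V → ℝ) where
  toFun x v := if h : v = i then 0 else x ⟨v, h⟩
  map_add' x y := by funext v; by_cases h : v = i <;> simp [h]
  map_smul' c x := by funext v; by_cases h : v = i <;> simp [h]

/-- upper: kernel vector of the submatrix not orthogonal to row i -/
lemma ker_vec_of_lt' (A : Matrix V V ℝ) (i : V)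
    (h : nullity A < nullity (deleteRC A i)) :
    ∃ x : {v : V // v ≠ i} → ℝ, (deleteRC A i).mulVec x = 0 ∧
      (∑ j : {v : V // v ≠ i}, A i ↑j * x j) ≠ 0 := by
  by_contra hc
  push_neg at hc
  have hmap : ∀ x ∈ LinearMap.ker (deleteRC A i).mulVecLin,
      extMap i x ∈ LinearMap.ker A.mulVecLin := by
    intro x hx
    rw [LinearMap.mem_ker] at hx ⊢
    have hx0 : (deleteRC A i).mulVec x = 0 := by simpa using hx
    have he : ∀ k : {v : V // v ≠ i}, extMap i x ↑k = x k := by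
      intro k; simp [extMap, k.2]
    funext j
    simp only [Matrix.mulVecLin_apply, Matrix.mulVec, dotProduct, Pi.zero_apply]
    rw [sum_split i]
    have hei : extMap i x i = 0 := by simp [extMap]
    rw [hei, mul_zero, zero_add]
    by_cases hj : j = i
    · rw [hj]
      have := hc x hx0
      calc ∑ k : {v : V // v ≠ i}, A i ↑k * extMap i x ↑k
          = ∑ k : {v : V // v ≠ i}, A i ↑k * x k := by
            exact Finset.sum_congr rfl fun k _ => by rw [he k]
        _ = 0 := this
    · have := congrFun hx0 ⟨j, hj⟩
      simp only [Matrix.mulVec, dotProduct, deleteRC, Matrix.submatrix_apply,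
        Pi.zero_apply] at this
      calc ∑ k : {v : V // v ≠ i}, A j ↑k * extMap i x ↑k
          = ∑ k : {v : V // v ≠ i}, A j ↑k * x k := by
            exact Finset.sum_congr rfl fun k _ => by rw [he k]
        _ = 0 := this
  set f := (extMap i).restrict hmap with hf
  have hinj : Function.Injective f := by
    rw [injective_iff_map_eq_zero]
    intro x hx
    have hx' : extMap i (x : {v : V // v ≠ i} → ℝ) = 0 := congrArg Subtype.val hx
    ext k
    have := congrFun hx' ↑k
    simpa [extMap, k.2] using this
  have := LinearMap.finrank_le_finrank_of_injective hinj
  unfold nullity at h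
  omega


variable {V : Type*} [Fintype V] [DecidableEq V]

lemma snip_to_sap (A : Matrix V V ℝ) (i : V) (h : HasSNIP A i) : HasSAP A :=
  fun X hs h1 h2 h3 => h X hs h1 h2 (fun r _ c => congrFun (congrFun h3 r) c)

lemma part_a_bwd (A : Matrix V V ℝ) (hA : A.IsSymm) (i : V)
    (hv : ∃ v, A.mulVec v = 0 ∧ v i ≠ 0) (hsap : HasSAP A) : HasSNIP A i := by
  obtain ⟨v, hv0, hvi⟩ := hv
  intro X hXs hAX h1X hrows
  have hrowi : ∀ c, (A * X) i c = 0 := by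
    intro c
    have key : ∑ k, v k * (A * X) k c = 0 := by
      have e1 : ∑ k, v k * (A * X) k c = ∑ j, (∑ k, A j k * v k) * X j c := by
        simp only [Matrix.mul_apply, Finset.mul_sum]
        rw [Finset.sum_comm]
        refine Finset.sum_congr rfl fun j _ => ?_
        rw [Finset.sum_mul]
        refine Finset.sum_congr rfl fun k _ => ?_
        rw [hA.apply j k]; ring
      rw [e1]
      refine Finset.sum_eq_zero fun j _ => ?_
      have : ∑ k, A j k * v k = 0 := by
        simpa [Matrix.mulVec, dotProduct] using congrFun hv0 j
      rw [this, zero_mul]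
    rw [sum_split i] at key
    have hz : ∑ k : {v : V // v ≠ i}, v ↑k * (A * X) ↑k c = 0 :=
      Finset.sum_eq_zero fun k _ => by rw [hrows ↑k k.2 c, mul_zero]
    rw [hz, add_zero] at key
    exact (mul_eq_zero.mp key).resolve_left hvi
  have hAX0 : A * X = 0 := by
    ext r c
    by_cases hr : r = i
    · subst hr; simpa using hrowi c
    · simpa using hrows r hr c
  exact hsap X hXs hAX h1X hAX0

lemma std_hadamard (i : V) (t : ℝ) (X : Matrix V V ℝ) (hX : X i i = 0) :
    (t • Matrix.single i i (1:ℝ)).hadamard X = 0 := by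
  ext r c
  simp only [Matrix.hadamard_apply, Matrix.smul_apply, Matrix.single,
    Matrix.of_apply, Matrix.zero_apply, smul_eq_mul]
  by_cases hr : i = r
  · by_cases hc : i = c
    · subst hr; subst hc; simp [hX]
    · simp [hc]
  · simp [hr]

lemma std_mul (i : V) (t : ℝ) (X : Matrix V V ℝ) (r : V) (hr : r ≠ i) (c : V) :
    ((t • Matrix.single i i (1:ℝ)) * X) r c = 0 := by
  simp only [Matrix.mul_apply, Matrix.smul_apply, Matrix.single, Matrix.of_apply,
    smul_eq_mul]
  refine Finset.sum_eq_zero fun j _ => ?_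
  rw [if_neg (by tauto), mul_zero, zero_mul]

lemma snip_add (A : Matrix V V ℝ) (i : V) (t : ℝ) (h : HasSNIP A i) :
    HasSNIP (A + t • Matrix.single i i (1:ℝ)) i := by
  intro X hXs hBX h1X hrows
  have hXii : X i i = 0 := by
    simpa using congrFun (congrFun h1X i) i
  refine h X hXs ?_ h1X ?_
  · have e : (A + t • Matrix.single i i (1:ℝ)).hadamard X
        = A.hadamard X + (t • Matrix.single i i (1:ℝ)).hadamard X :=
      Matrix.add_hadamard _ _ _
    rw [e, std_hadamard i t X hXii, add_zero] at hBX
    exact hBX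
  · intro r hr c
    have hb := hrows r hr c
    rw [Matrix.add_mul] at hb
    rw [Matrix.add_apply, std_mul i t X r hr c, add_zero] at hb
    exact hb

lemma snip_shift_iff (A : Matrix V V ℝ) (i : V) (t : ℝ) :
    HasSNIP A i ↔ HasSNIP (A + t • Matrix.single i i (1:ℝ)) i := by
  constructor
  · exact snip_add A i t
  · intro h
    have h2 := snip_add _ i (-t) h
    have e : A + t • Matrix.single i i (1:ℝ) +
        (-t) • Matrix.single i i (1:ℝ) = A := by
      rw [add_assoc, ← add_smul]
      simp
    rwa [e] at h2


variable {V : Type*} [Fintype V] [DecidableEq V]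

lemma part_c_fwd (A : Matrix V V ℝ) (i : V) (h : HasSNIP A i) : HasSAP (deleteRC A i) := by
  intro Y hYs hBY h1Y hBY0
  set X : Matrix V V ℝ :=
    fun v w => if hv : v = i then 0 else if hw : w = i then 0 else Y ⟨v, hv⟩ ⟨w, hw⟩ with hXdef
  have hXapp : ∀ (v w : V) (hv : v ≠ i) (hw : w ≠ i), X v w = Y ⟨v, hv⟩ ⟨w, hw⟩ := by
    intro v w hv hw; simp [hXdef, hv, hw]
  have hXr : ∀ w, X i w = 0 := fun w => by simp [hXdef]
  have hXc : ∀ v, X v i = 0 := fun v => by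
    by_cases hv : v = i <;> simp [hXdef, hv]
  have hX0 : X = 0 := by
    refine h X ?_ ?_ ?_ ?_
    · ext v w
      show X w v = X v w
      by_cases hv : v = i
      · subst hv; rw [hXr w, hXc w]
      by_cases hw : w = i
      · subst hw; rw [hXr v, hXc v]
      rw [hXapp w v hw hv, hXapp v w hv hw]
      exact hYs.apply ⟨v, hv⟩ ⟨w, hw⟩
    · ext v w
      show A v w * X v w = 0
      by_cases hv : v = i
      · subst hv; rw [hXr w, mul_zero]
      by_cases hw : w = i
      · subst hw; rw [hXc v, mul_zero]
      rw [hXapp v w hv hw]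
      simpa [deleteRC, Matrix.hadamard_apply] using
        congrFun (congrFun hBY ⟨v, hv⟩) ⟨w, hw⟩
    · ext v w
      show (1 : Matrix V V ℝ) v w * X v w = 0
      by_cases hvw : v = w
      · subst hvw
        by_cases hv : v = i
        · subst hv; rw [hXr v, mul_zero]
        · rw [hXapp v v hv hv]
          simpa [Matrix.hadamard_apply] using congrFun (congrFun h1Y ⟨v, hv⟩) ⟨v, hv⟩
      · rw [Matrix.one_apply_ne hvw, zero_mul]
    · intro r hr c
      rw [Matrix.mul_apply]
      by_cases hc : c = i
      · subst hc
        exact Finset.sum_eq_zero fun j _ => by rw [hXc j, mul_zero]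
      · rw [sum_split i, hXr c, mul_zero, zero_add]
        have := congrFun (congrFun hBY0 ⟨r, hr⟩) ⟨c, hc⟩
        rw [Matrix.mul_apply] at this
        simp only [Matrix.zero_apply] at this
        calc ∑ j : {v : V // v ≠ i}, A r ↑j * X ↑j c
            = ∑ j : {v : V // v ≠ i}, deleteRC A i ⟨r, hr⟩ j * Y j ⟨c, hc⟩ := by
              refine Finset.sum_congr rfl fun j _ => ?_
              rw [hXapp ↑j c j.2 hc]
              rfl
          _ = 0 := this
  ext r c
  have := congrFun (congrFun hX0 ↑r) ↑c
  rw [hXapp ↑r ↑c r.2 c.2] at this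
  simpa using this

lemma part_c_bwd (A : Matrix V V ℝ) (hA : A.IsSymm) (i : V)
    (hx : ∃ x0 : {v : V // v ≠ i} → ℝ, (deleteRC A i).mulVec x0 = 0 ∧
      (∑ j : {v : V // v ≠ i}, A i ↑j * x0 j) ≠ 0)
    (hsap : HasSAP (deleteRC A i)) : HasSNIP A i := by
  obtain ⟨x0, hx0, hs⟩ := hx
  intro X hXs hAX h1X hrows
  have hXdiag : ∀ a, X a a = 0 := fun a => by
    simpa using congrFun (congrFun h1X a) a
  have hXic : ∀ c, X i c = 0 := by
    intro c
    by_cases hc : c = i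
    · rw [hc]; exact hXdiag i
    have key : ∑ k : {v : V // v ≠ i}, x0 k * (A * X) ↑k c = 0 :=
      Finset.sum_eq_zero fun k _ => by rw [hrows ↑k k.2 c, mul_zero]
    have expand : ∑ k : {v : V // v ≠ i}, x0 k * (A * X) ↑k c
        = ∑ j, (∑ k : {v : V // v ≠ i}, x0 k * A ↑k j) * X j c := by
      simp only [Matrix.mul_apply, Finset.mul_sum]
      rw [Finset.sum_comm]
      refine Finset.sum_congr rfl fun j _ => ?_
      rw [Finset.sum_mul]
      exact Finset.sum_congr rfl fun k _ => (mul_assoc _ _ _).symm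
    rw [expand, sum_split i] at key
    have h2 : ∑ j : {v : V // v ≠ i}, (∑ k : {v : V // v ≠ i}, x0 k * A ↑k ↑j) * X ↑j c = 0 := by
      refine Finset.sum_eq_zero fun j _ => ?_
      have hcoef : ∑ k : {v : V // v ≠ i}, x0 k * A ↑k ↑j = 0 := by
        have hb := congrFun hx0 j
        simp only [Matrix.mulVec, dotProduct, deleteRC, Matrix.submatrix_apply,
          Pi.zero_apply] at hb
        calc ∑ k : {v : V // v ≠ i}, x0 k * A ↑k ↑j
            = ∑ k : {v : V // v ≠ i}, A ↑j ↑k * x0 k := by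
              refine Finset.sum_congr rfl fun k _ => ?_
              rw [hA.apply ↑j ↑k]; ring
          _ = 0 := hb
      rw [hcoef, zero_mul]
    rw [h2, add_zero] at key
    have hcoefi : ∑ k : {v : V // v ≠ i}, x0 k * A ↑k i
        = ∑ k : {v : V // v ≠ i}, A i ↑k * x0 k := by
      refine Finset.sum_congr rfl fun k _ => ?_
      rw [hA.apply i ↑k]; ring
    rw [hcoefi] at key
    exact (mul_eq_zero.mp key).resolve_left hs
  have hXci : ∀ r, X r i = 0 := by
    intro r
    have := congrFun (congrFun hXs i) r
    simp only [Matrix.transpose_apply] at this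
    rw [this, hXic r]
  have hY0 : deleteRC X i = 0 := by
    refine hsap _ ?_ ?_ ?_ ?_
    · ext r c
      show X ↑c ↑r = X ↑r ↑c
      exact hXs.apply ↑r ↑c
    · ext r c
      show A ↑r ↑c * X ↑r ↑c = 0
      simpa using congrFun (congrFun hAX ↑r) ↑c
    · ext r c
      show (1 : Matrix {v : V // v ≠ i} {v : V // v ≠ i} ℝ) r c * X ↑r ↑c = 0
      by_cases hrc : r = c
      · subst hrc; rw [hXdiag ↑r, mul_zero]
      · rw [Matrix.one_apply_ne hrc, zero_mul]
    · ext r c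
      show ∑ j : {v : V // v ≠ i}, A ↑r ↑j * X ↑j ↑c = 0
      have e : ∑ j : {v : V // v ≠ i}, A ↑r ↑j * X ↑j ↑c
          = (A * X) ↑r ↑c - A ↑r i * X i ↑c := by
        rw [Matrix.mul_apply, sum_split i (fun j => A ↑r j * X j ↑c)]
        ring
      rw [e, hrows ↑r r.2 ↑c, hXic ↑c, mul_zero, sub_zero]
  ext v w
  show X v w = 0
  by_cases hv : v = i
  · subst hv; exact hXic w
  by_cases hw : w = i
  · subst hw; exact hXci v
  exact congrFun (congrFun hY0 ⟨v, hv⟩) ⟨w, hw⟩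


lemma symm_add_std (A : Matrix V V ℝ) (hA : A.IsSymm) (i : V) (t : ℝ) :
    (A + t • Matrix.single i i (1:ℝ)).IsSymm := by
  ext a b
  simp only [Matrix.transpose_apply, Matrix.add_apply, Matrix.smul_apply,
    Matrix.single, Matrix.of_apply, smul_eq_mul]
  rw [hA.apply a b]
  by_cases h1 : i = a <;> by_cases h2 : i = b <;> simp [h1, h2]

end Helpers

/-- characterization of the `i`-SNIP according to whether `i` is a downer,
neutral, or upper index. -/
theorem stmt7 {n : ℕ} (A : Matrix (Fin n) (Fin n) ℝ) (hA : A.IsSymm) (i : Fin n) :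
    (nullity A = nullity (deleteRC A i) + 1 → (HasSNIP A i ↔ HasSAP A)) ∧
    (∀ t : ℝ, nullity A = nullity (deleteRC A i) → t ≠ 0 →
      nullity (A + t • Matrix.single i i (1 : ℝ)) =
        nullity (deleteRC (A + t • Matrix.single i i (1 : ℝ)) i) + 1 →
      (HasSNIP A i ↔ HasSAP (A + t • Matrix.single i i (1 : ℝ)))) ∧
    (nullity A + 1 = nullity (deleteRC A i) → (HasSNIP A i ↔ HasSAP (deleteRC A i))) := by
  refine ⟨?_, ?_, ?_⟩
  · intro hd
    exact ⟨fun h => snip_to_sap A i h,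
      fun h => part_a_bwd A hA i (ker_vec_of_lt A i (by omega)) h⟩
  · intro t _ _ hdB
    set B := A + t • Matrix.single i i (1:ℝ) with hB
    constructor
    · intro h
      exact snip_to_sap B i ((snip_shift_iff A i t).mp h)
    · intro h
      exact (snip_shift_iff A i t).mpr
        (part_a_bwd B (symm_add_std A hA i t) i (ker_vec_of_lt B i (by omega)) h)
  · intro hu
    exact ⟨fun h => part_c_fwd A i h,
      fun h => part_c_bwd A hA i (ker_vec_of_lt' A i (by omega)) h⟩
end

section
/- Let G be any simple graph on a finite vertex set and i a vertex of G. Then (G,i) allows the nullity pair (0,0) with the SNIP, and (G,i) allows the nullity pair (1,0) with the SNIP. -/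
open Matrix

/-! Both witnesses are `L + D` with `L` the Laplacian of `G` and `D ≥ 0` diagonal: they lie in
`𝒮(G)` and are positive semidefinite. For a positive semidefinite `A`, a vector `x` with `x i = 0`
and `A x` supported on `{i}` has `xᵀ A x = 0`, so it is a null vector of `A`. Hence, once no
nonzero null vector of `A` vanishes at `i`, such an `x` is zero, and this one fact gives both the
nonsingularity of `A(i)` (extend a null vector of `A(i)` by `0`) and the `i`-SNIP (apply it to
the columns of `X`, starting with column `i`, whose `i`-th entry is a diagonal entry).
`D = I` gives the pair `(0,0)`. For `(1,0)`, `D` is the indicator of the vertices outside the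
component of `i`: the kernel of `L + D` is then spanned by the indicator of that component. -/

section Nullity

variable {V : Type*} [Fintype V]

theorem nullity_eq_zero_iff {A : Matrix V V ℝ} : nullity A = 0 ↔ ∀ x, A *ᵥ x = 0 → x = 0 := by
  rw [nullity, Submodule.finrank_eq_zero, LinearMap.ker_eq_bot']
  rfl

theorem nullity_eq_one {A : Matrix V V ℝ} {z : V → ℝ} (hz : z ≠ 0)
    (hA : ∀ x, A *ᵥ x = 0 ↔ ∃ c : ℝ, x = c • z) : nullity A = 1 := by
  have hker : LinearMap.ker A.mulVecLin = ℝ ∙ z := by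
    ext x
    simp only [LinearMap.mem_ker, mulVecLin_apply, hA, Submodule.mem_span_singleton, eq_comm]
  rw [nullity, hker, finrank_span_singleton hz]

end Nullity

section RootedKernel

variable {V : Type*} [Fintype V] [DecidableEq V] {A : Matrix V V ℝ} {i : V}

theorem hasSNIP_of_forall_mulVec
    (hA : ∀ x : V → ℝ, x i = 0 → (∀ r, r ≠ i → (A *ᵥ x) r = 0) → x = 0) : HasSNIP A i := by
  intro X hX _ hdiag hrows
  have hcol : ∀ c, X i c = 0 → ∀ r, X r c = 0 := fun c hic =>
    congrFun (hA (fun r => X r c) hic fun r hr => hrows r hr c)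
  have hii : X i i = 0 := by simpa using congrFun (congrFun hdiag i) i
  ext r c
  exact hcol c (by rw [← hX.apply]; exact hcol i hii c) r

theorem nullity_deleteRC_eq_zero
    (hA : ∀ x : V → ℝ, x i = 0 → (∀ r, r ≠ i → (A *ᵥ x) r = 0) → x = 0) :
    nullity (deleteRC A i) = 0 := by
  refine nullity_eq_zero_iff.2 fun y hy => ?_
  let x : V → ℝ := fun v => if h : v = i then 0 else y ⟨v, h⟩
  have hx : x = 0 := hA x (dif_pos rfl) fun r hr => by
    have hrestrict : (A *ᵥ x) r = (deleteRC A i *ᵥ y) ⟨r, hr⟩ := by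
      simp only [mulVec, dotProduct, Fintype.sum_eq_add_sum_subtype_ne _ i, x, ↓reduceDIte,
        mul_zero, zero_add, deleteRC, submatrix_apply]
      exact Finset.sum_congr rfl fun v _ => by simp only [dif_neg v.2]
    rw [hrestrict, hy, Pi.zero_apply]
  funext v
  simpa [x, v.2] using congrFun hx v

theorem Matrix.PosSemidef.forall_eq_zero_of_mulVec_eq_zero_off (hA : A.PosSemidef)
    (hker : ∀ x, A *ᵥ x = 0 → x i = 0 → x = 0) :
    ∀ x : V → ℝ, x i = 0 → (∀ r, r ≠ i → (A *ᵥ x) r = 0) → x = 0 := by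
  intro x hxi hAx
  refine hker x ((hA.dotProduct_mulVec_zero_iff x).1 ?_) hxi
  refine Finset.sum_eq_zero fun r _ => ?_
  by_cases hr : r = i
  · simp [hr, hxi]
  · simp [hAx r hr]

end RootedKernel

open scoped ComplexOrder in
theorem Matrix.PosSemidef.add_mulVec_eq_zero_iff {n 𝕜 : Type*} [Fintype n] [RCLike 𝕜]
    {A B : Matrix n n 𝕜} (hA : A.PosSemidef) (hB : B.PosSemidef) (x : n → 𝕜) :
    (A + B) *ᵥ x = 0 ↔ A *ᵥ x = 0 ∧ B *ᵥ x = 0 := by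
  refine ⟨fun h => ?_, fun ⟨hAx, hBx⟩ => by rw [add_mulVec, hAx, hBx, add_zero]⟩
  rw [← (hA.add hB).dotProduct_mulVec_zero_iff, add_mulVec, dotProduct_add,
    add_eq_zero_iff_of_nonneg (hA.dotProduct_mulVec_nonneg x) (hB.dotProduct_mulVec_nonneg x)] at h
  exact ⟨(hA.dotProduct_mulVec_zero_iff x).1 h.1, (hB.dotProduct_mulVec_zero_iff x).1 h.2⟩

namespace SimpleGraph

variable {V : Type*} [Fintype V] [DecidableEq V] (G : SimpleGraph V) [DecidableRel G.Adj]

theorem lapMatrix_add_diagonal_mulVec_eq_zero_iff {d : V → ℝ} (hd : 0 ≤ d) (x : V → ℝ) :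
    (G.lapMatrix ℝ + diagonal d) *ᵥ x = 0 ↔
      (∀ u v, G.Reachable u v → x u = x v) ∧ ∀ v, d v ≠ 0 → x v = 0 := by
  rw [(G.posSemidef_lapMatrix ℝ).add_mulVec_eq_zero_iff (posSemidef_diagonal_iff.2 hd),
    lapMatrix_mulVec_eq_zero_iff_forall_reachable]
  simp only [funext_iff, mulVec_diagonal, Pi.zero_apply, mul_eq_zero, or_iff_not_imp_left]

theorem inSG_lapMatrix_add_diagonal (d : V → ℝ) : InSG G (G.lapMatrix ℝ + diagonal d) := by
  refine ⟨(G.isSymm_lapMatrix ℝ).add (isSymm_diagonal d), fun u v huv => ?_⟩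
  by_cases h : G.Adj u v <;> simp [lapMatrix, degMatrix, huv, h]

theorem lapMatrix_add_diagonal_indicator_mulVec_eq_zero_iff (i : V) (x : V → ℝ) :
    (G.lapMatrix ℝ + diagonal ({v | G.Reachable i v}ᶜ.indicator 1)) *ᵥ x = 0 ↔
      ∃ c : ℝ, x = c • {v | G.Reachable i v}.indicator 1 := by
  rw [G.lapMatrix_add_diagonal_mulVec_eq_zero_iff
    (Set.indicator_nonneg (f := 1) fun _ _ => zero_le_one)]
  constructor
  · rintro ⟨hconst, houtside⟩
    refine ⟨x i, funext fun v => ?_⟩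
    by_cases hv : G.Reachable i v
    · simp [hv, hconst i v hv]
    · simp [hv, houtside v (by simp [hv])]
  · rintro ⟨c, rfl⟩
    refine ⟨fun u v huv => ?_, fun v hv => by simp_all⟩
    have : G.Reachable i u ↔ G.Reachable i v := ⟨(·.trans huv), (·.trans huv.symm)⟩
    simp only [Pi.smul_apply, Set.indicator_apply, Set.mem_ofPred_eq, Pi.one_apply, this]

theorem allowsSNIP_lapMatrix_add_diagonal (i : V) {d : V → ℝ} (hd : 0 ≤ d)
    (hker : ∀ x, (G.lapMatrix ℝ + diagonal d) *ᵥ x = 0 → x i = 0 → x = 0) :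
    AllowsSNIP G i (nullity (G.lapMatrix ℝ + diagonal d)) 0 :=
  have hroot := ((G.posSemidef_lapMatrix ℝ).add (posSemidef_diagonal_iff.2 hd))
    |>.forall_eq_zero_of_mulVec_eq_zero_off hker
  ⟨_, G.inSG_lapMatrix_add_diagonal d, rfl, nullity_deleteRC_eq_zero hroot,
    hasSNIP_of_forall_mulVec hroot⟩

end SimpleGraph

/-- every rooted graph allows the nullity pairs `(0,0)` and `(1,0)` with the SNIP. -/
theorem stmt9 {V : Type*} [Fintype V] [DecidableEq V] (G : SimpleGraph V) (i : V) :
    AllowsSNIP G i 0 0 ∧ AllowsSNIP G i 1 0 := by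
  classical
  constructor
  · have hker : ∀ x, (G.lapMatrix ℝ + diagonal 1) *ᵥ x = 0 → x = 0 := fun x hx =>
      funext fun v => ((G.lapMatrix_add_diagonal_mulVec_eq_zero_iff zero_le_one x).1
        hx).2 v one_ne_zero
    exact nullity_eq_zero_iff.2 hker ▸
      G.allowsSNIP_lapMatrix_add_diagonal i zero_le_one fun x hx _ => hker x hx
  · have hker := G.lapMatrix_add_diagonal_indicator_mulVec_eq_zero_iff i
    have hz : {v | G.Reachable i v}.indicator (1 : V → ℝ) ≠ 0 := fun h => by
      simpa using congrFun h i
    exact nullity_eq_one hz hker ▸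
      G.allowsSNIP_lapMatrix_add_diagonal i (Set.indicator_nonneg (f := 1) fun _ _ => zero_le_one)
        fun x hx hxi => by
          obtain ⟨c, rfl⟩ := (hker x).1 hx
          simp_all
end

section
/- Let G be a simple graph on a finite vertex set and let i be a vertex of G that is not isolated (i.e., i has at least one neighbor in G). Then (G,i) allows the nullity pair (0,1) with the SNIP. -/
open Matrix

/-!
Let `j` be a neighbour of `i` and `z` the indicator of the component `C` of `j` in `G - i`.
The matrix `B = L(G - i) + D`, where `D` is the identity on the vertices outside `C`, is positive
semidefinite with kernel spanned by `z`, so `null B = 1`. Bordering `B` by the negated adjacency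
row of `i` gives `A ∈ 𝒮(G)` with `A(i) = B`; as `i` has the neighbour `j ∈ C`, the border row is
not orthogonal to `z`, which forces `null A = 0`. For a nonsingular `A` the `i`-SNIP is automatic:
`AX` vanishes outside row `i`, so `X = A⁻¹ eᵢ mᵀ` has rank at most one, and a symmetric rank-one
matrix with zero diagonal is zero.
-/

theorem Matrix.vecMulVec_eq_zero_of_isSymm {n R : Type*} [CommRing R] [NoZeroDivisors R]
    {w m : n → R} (hsymm : (vecMulVec w m).IsSymm) (hdiag : ∀ c, w c * m c = 0) :
    vecMulVec w m = 0 := by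
  ext v c
  have hvc : w v * m c = w c * m v := by
    simpa [vecMulVec_apply] using congr_fun₂ hsymm.eq c v
  -- A rank-one matrix has vanishing 2 × 2 minors: `X v c * X c v = X v v * X c c`.
  have hsq : (w v * m c) * (w v * m c) = (w v * m v) * (w c * m c) := by
    conv_lhs => arg 2; rw [hvc]
    ring
  rw [hdiag c, mul_zero, mul_self_eq_zero] at hsq
  simpa [vecMulVec_apply] using hsq

theorem hasSNIP_of_ker_eq_bot {V : Type*} [Fintype V] [DecidableEq V] {A : Matrix V V ℝ}
    (hA : LinearMap.ker A.mulVecLin = ⊥) (i : V) : HasSNIP A i := by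
  intro X hXsymm _ hXdiag hrows
  have hdet : IsUnit A.det := by
    refine isUnit_iff_ne_zero.mpr fun h => ?_
    obtain ⟨v, hv, hAv⟩ := exists_mulVec_eq_zero_iff.mpr h
    exact hv (LinearMap.ker_eq_bot'.mp hA v hAv)
  have hAX : A * X = vecMulVec (Pi.single i 1) ((A * X) i) := by
    ext r c
    by_cases hr : r = i
    · subst hr; simp [vecMulVec_apply]
    · simp [vecMulVec_apply, hr, hrows r hr c]
  have hX : X = vecMulVec (A⁻¹ *ᵥ Pi.single i 1) ((A * X) i) := by
    rw [← mul_vecMulVec, ← hAX, ← Matrix.mul_assoc, nonsing_inv_mul _ hdet, Matrix.one_mul]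
  rw [hX] at hXsymm hXdiag ⊢
  refine vecMulVec_eq_zero_of_isSymm hXsymm fun c => ?_
  simpa [vecMulVec_apply] using congr_fun₂ hXdiag c c

namespace SimpleGraph

variable {W : Type*} [Fintype W] [DecidableEq W] (H : SimpleGraph W) [DecidableRel H.Adj] (j : W)

noncomputable def componentIndicator : W → ℝ := {v | H.Reachable j v}.indicator 1

theorem componentIndicator_mul_self (v : W) :
    H.componentIndicator j v * H.componentIndicator j v = H.componentIndicator j v := by
  by_cases hv : H.Reachable j v <;> simp [componentIndicator, hv]

theorem lapMatrix_mulVec_componentIndicator : H.lapMatrix ℝ *ᵥ H.componentIndicator j = 0 := by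
  rw [lapMatrix_mulVec_eq_zero_iff_forall_reachable]
  intro u v huv
  by_cases hu : H.Reachable j u
  · simp [componentIndicator, hu, hu.trans huv]
  · have hv : ¬ H.Reachable j v := fun hv => hu (hv.trans huv.symm)
    simp [componentIndicator, hu, hv]

theorem eq_smul_componentIndicator_of_mulVec_eq_zero {x : W → ℝ}
    (hx : (H.lapMatrix ℝ + diagonal (1 - H.componentIndicator j)) *ᵥ x = 0) :
    x = x j • H.componentIndicator j := by
  set z := H.componentIndicator j
  have hdiag_nonneg : ∀ v, 0 ≤ (1 - z v) * (x v * x v) := fun v =>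
    mul_nonneg (by by_cases hv : H.Reachable j v <;> simp [z, componentIndicator, hv])
      (mul_self_nonneg _)
  have hquad : x ⬝ᵥ (H.lapMatrix ℝ *ᵥ x) + ∑ v, (1 - z v) * (x v * x v) = 0 := by
    have h := congrArg (x ⬝ᵥ ·) hx
    simp only [add_mulVec, dotProduct_add, dotProduct_zero] at h
    rw [← h]
    congr 1
    exact Finset.sum_congr rfl fun v _ => by
      simp only [mulVec_diagonal, Pi.sub_apply, Pi.one_apply]
      ring
  have hlap := (H.posSemidef_lapMatrix ℝ).dotProduct_mulVec_nonneg x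
  rw [star_trivial] at hlap
  have hsum := Finset.sum_nonneg fun v (_ : v ∈ Finset.univ) => hdiag_nonneg v
  have hconst : ∀ u v, H.Reachable u v → x u = x v := by
    rw [← lapMatrix_toLinearMap₂'_apply'_eq_zero_iff_forall_reachable, toLinearMap₂'_apply']
    linarith
  have hout : ∀ v, ¬ H.Reachable j v → x v = 0 := by
    intro v hv
    have := (Finset.sum_eq_zero_iff_of_nonneg fun v _ => hdiag_nonneg v).mp (by linarith) v
      (Finset.mem_univ v)
    simpa [z, componentIndicator, hv] using this
  funext v
  by_cases hv : H.Reachable j v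
  · simp [z, componentIndicator, hv, hconst j v hv]
  · simp [z, componentIndicator, hv, hout v hv]

theorem ker_lapMatrix_add_diagonal :
    LinearMap.ker (H.lapMatrix ℝ + diagonal (1 - H.componentIndicator j)).mulVecLin =
      ℝ ∙ H.componentIndicator j := by
  ext x
  rw [LinearMap.mem_ker, mulVecLin_apply, Submodule.mem_span_singleton]
  refine ⟨fun hx => ⟨x j, (eq_smul_componentIndicator_of_mulVec_eq_zero H j hx).symm⟩, ?_⟩
  rintro ⟨c, rfl⟩
  rw [mulVec_smul, add_mulVec, lapMatrix_mulVec_componentIndicator, zero_add]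
  ext v
  rw [Pi.smul_apply, mulVec_diagonal]
  simp [sub_mul, componentIndicator_mul_self]

theorem finrank_ker_lapMatrix_add_diagonal :
    Module.finrank ℝ
      (LinearMap.ker (H.lapMatrix ℝ + diagonal (1 - H.componentIndicator j)).mulVecLin) = 1 := by
  rw [ker_lapMatrix_add_diagonal]
  refine finrank_span_singleton fun h => ?_
  simpa [componentIndicator] using congr_fun h j

end SimpleGraph

section Bordered

variable {V : Type*} [Fintype V] [DecidableEq V]

theorem mulVec_val_eq_add_deleteRC_mulVec (A : Matrix V V ℝ) (x : V → ℝ) {i : V}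
    (r : {v // v ≠ i}) :
    (A *ᵥ x) r = A r i * x i + (deleteRC A i *ᵥ fun u => x u) r := by
  rw [mulVec, dotProduct, Fintype.sum_eq_add_sum_subtype_ne _ i]
  rfl

theorem mulVec_self_eq_add_dotProduct (A : Matrix V V ℝ) (x : V → ℝ) (i : V) :
    (A *ᵥ x) i = A i i * x i + (fun u : {v // v ≠ i} => A i u) ⬝ᵥ fun u => x u := by
  rw [mulVec, dotProduct, Fintype.sum_eq_add_sum_subtype_ne _ i]
  rfl

theorem ker_eq_bot_of_ker_deleteRC_eq_span {A : Matrix V V ℝ} (hA : A.IsSymm) {i : V}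
    {z : {v // v ≠ i} → ℝ} (hker : LinearMap.ker (deleteRC A i).mulVecLin = ℝ ∙ z)
    (hz : (fun u : {v // v ≠ i} => A i u) ⬝ᵥ z ≠ 0) : LinearMap.ker A.mulVecLin = ⊥ := by
  rw [LinearMap.ker_eq_bot']
  intro x hx
  rw [mulVecLin_apply] at hx
  have hrow_i := mulVec_self_eq_add_dotProduct A x i
  have hrow_ne := mulVec_val_eq_add_deleteRC_mulVec A x (i := i)
  simp only [hx, Pi.zero_apply, hA.apply i] at hrow_i hrow_ne
  set y : {v // v ≠ i} → ℝ := fun u => x u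
  set a : {v // v ≠ i} → ℝ := fun u => A i u
  have hB : (deleteRC A i).IsSymm := hA.submatrix _
  have hmem : ∀ w, w ∈ LinearMap.ker (deleteRC A i).mulVecLin ↔ ∃ c : ℝ, c • z = w := by
    simp [hker, Submodule.mem_span_singleton]
  have hBz : deleteRC A i *ᵥ z = 0 := (hmem z).mpr ⟨1, one_smul ℝ z⟩
  have hrows : x i • a + deleteRC A i *ᵥ y = 0 := by
    ext r
    simpa [a, mul_comm] using (hrow_ne r).symm
  -- `z ⬝ᵥ B y = B z ⬝ᵥ y = 0` as `B = A(i)` is symmetric.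
  have hxi : x i = 0 := by
    have h := congrArg (z ⬝ᵥ ·) hrows
    simp only [dotProduct_add, dotProduct_smul, dotProduct_mulVec, ← mulVec_transpose, hB.eq, hBz,
      zero_dotProduct, add_zero, dotProduct_zero, smul_eq_mul] at h
    exact (mul_eq_zero.mp h).resolve_right (by rwa [dotProduct_comm])
  obtain ⟨c, hc⟩ := (hmem y).mp (by simpa [hxi] using hrows)
  have hc0 : c = 0 := by
    rw [hxi, mul_zero, zero_add, ← hc, dotProduct_smul, smul_eq_mul] at hrow_i
    exact (mul_eq_zero.mp hrow_i.symm).resolve_right hz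
  funext v
  by_cases hv : v = i
  · rw [hv, hxi]; rfl
  · simpa [y, hc0] using (congr_fun hc ⟨v, hv⟩).symm

end Bordered

section Witness

variable {V : Type*} [DecidableEq V] (G : SimpleGraph V) [DecidableRel G.Adj]

theorem inSG_diagonal_sub_adjMatrix (d : V → ℝ) : InSG G (diagonal d - G.adjMatrix ℝ) := by
  refine ⟨(isSymm_diagonal d).sub G.isSymm_adjMatrix, fun u v huv => ?_⟩
  by_cases h : G.Adj u v <;> simp [huv, h]

theorem deleteRC_diagonal_sub_adjMatrix (d : V → ℝ) (i : V) :
    deleteRC (diagonal d - G.adjMatrix ℝ) i =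
      diagonal (fun v : {v // v ≠ i} => d v) - (G.comap Subtype.val).adjMatrix ℝ := by
  ext u v
  by_cases huv : u = v
  · subst huv; simp [deleteRC]
  · simp [deleteRC, huv, Subtype.val_injective.ne huv]

variable [Fintype V]

noncomputable def snipWitness (i : V) (j : {v // v ≠ i}) : Matrix V V ℝ :=
  diagonal (fun v => if h : v = i then 0 else
      let v' : {v // v ≠ i} := ⟨v, h⟩
      (G.comap Subtype.val).degree v' + 1 - (G.comap Subtype.val).componentIndicator j v') -
    G.adjMatrix ℝ

variable {G}

theorem deleteRC_snipWitness (i : V) (j : {v // v ≠ i}) :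
    deleteRC (snipWitness G i j) i = (G.comap Subtype.val).lapMatrix ℝ +
      diagonal (1 - (G.comap Subtype.val).componentIndicator j) := by
  rw [snipWitness, deleteRC_diagonal_sub_adjMatrix, SimpleGraph.lapMatrix, SimpleGraph.degMatrix]
  ext u v
  by_cases huv : u = v
  · subst huv
    simp [u.2, add_sub_assoc]
  · simp [huv]

theorem snipWitness_dotProduct_componentIndicator_ne_zero {i : V} {j : {v // v ≠ i}}
    (hij : G.Adj i j) :
    (fun u : {v // v ≠ i} => snipWitness G i j i u) ⬝ᵥ
      (G.comap Subtype.val).componentIndicator j ≠ 0 := by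
  set z := (G.comap Subtype.val).componentIndicator j
  have hentry : ∀ u : {v // v ≠ i}, snipWitness G i j i u = -G.adjMatrix ℝ i u := fun u => by
    simp [snipWitness, diagonal_apply_ne _ u.2.symm]
  have hpos : 1 ≤ ∑ u : {v // v ≠ i}, G.adjMatrix ℝ i u * z u :=
    calc (1 : ℝ) = G.adjMatrix ℝ i j * z j := by simp [z, hij, SimpleGraph.componentIndicator]
      _ ≤ ∑ u : {v // v ≠ i}, G.adjMatrix ℝ i u * z u :=
        Finset.single_le_sum (f := fun u : {v // v ≠ i} => G.adjMatrix ℝ i u * z u)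
          (fun u _ => mul_nonneg (by by_cases h : G.Adj i u <;> simp [h])
            (Set.indicator_apply_nonneg fun _ => zero_le_one)) (Finset.mem_univ j)
  simp only [dotProduct, hentry, neg_mul, Finset.sum_neg_distrib]
  linarith

end Witness

/-- if the root `i` is not isolated, `(G,i)` allows `(0,1)` with the SNIP. -/
theorem stmt10 {V : Type*} [Fintype V] [DecidableEq V] (G : SimpleGraph V) (i : V)
    (h : ∃ j : V, G.Adj i j) : AllowsSNIP G i 0 1 := by
  classical
  obtain ⟨j, hij⟩ := h
  set j' : {v // v ≠ i} := ⟨j, hij.ne'⟩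
  have hdel := deleteRC_snipWitness (G := G) i j'
  have hker : LinearMap.ker (snipWitness G i j').mulVecLin = ⊥ :=
    ker_eq_bot_of_ker_deleteRC_eq_span (inSG_diagonal_sub_adjMatrix G _).1
      (by rw [hdel]; exact SimpleGraph.ker_lapMatrix_add_diagonal _ _)
      (snipWitness_dotProduct_componentIndicator_ne_zero hij)
  refine ⟨snipWitness G i j', inSG_diagonal_sub_adjMatrix G _, ?_, ?_,
    hasSNIP_of_ker_eq_bot hker i⟩
  · rw [nullity, hker, finrank_bot]
  · rw [nullity, hdel, SimpleGraph.finrank_ker_lapMatrix_add_diagonal]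
end

section
/- Let n ≥ 2, let K_n be the complete graph on n vertices, and let i be a vertex of K_n. Then every matrix A ∈ 𝒮(K_n) has the i-SNIP, and for nonnegative integers k, ℓ, the rooted graph (K_n,i) allows the nullity pair (k,ℓ) with the SNIP if and only if either (|k − ℓ| ≤ 1 and ℓ + 2 ≤ n) or (k,ℓ) = (0,1). -/
open Matrix

set_option linter.unusedSectionVars false
open Finset

section Helpers

variable {W : Type*} [Fintype W] [DecidableEq W]

/-- weighted sum functional -/
def wsum (f : W → ℝ) : (W → ℝ) →ₗ[ℝ] ℝ where
  toFun x := ∑ v, f v * x v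
  map_add' x y := by simp [mul_add, Finset.sum_add_distrib]
  map_smul' c x := by
    simp only [RingHom.id_apply, Finset.mul_sum, Pi.smul_apply, smul_eq_mul]
    exact Finset.sum_congr rfl fun v _ => by ring

lemma wsum_apply (f x : W → ℝ) : wsum f x = ∑ v, f v * x v := rfl

lemma mem_ker_iff (A : Matrix W W ℝ) (x : W → ℝ) :
    x ∈ LinearMap.ker A.mulVecLin ↔ ∀ v, ∑ w, A v w * x w = 0 := by
  simp [LinearMap.mem_ker, mulVecLin_apply, funext_iff, Matrix.mulVec, dotProduct]

/-- extension by zero -/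
def ext0 (S : Finset W) (z : {v // v ∉ S} → ℝ) : W → ℝ :=
  fun v => if h : v ∉ S then z ⟨v, h⟩ else 0

lemma sum_mul_ext0 (S : Finset W) (z : {v // v ∉ S} → ℝ) (f : W → ℝ) :
    ∑ v, f v * ext0 S z v = ∑ v : {v // v ∉ S}, f v.1 * z v := by
  rw [← Finset.sum_filter_add_sum_filter_not univ (fun v => v ∉ S) (fun v => f v * ext0 S z v)]
  have h1 : ∑ v ∈ univ.filter (fun v => ¬ v ∉ S), f v * ext0 S z v = 0 := by
    apply Finset.sum_eq_zero
    intro v hv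
    simp only [Finset.mem_filter] at hv
    simp [ext0, hv.2]
  rw [h1, add_zero]
  rw [Finset.sum_subtype (p := fun v => v ∉ S) (univ.filter (fun v => v ∉ S)) (by simp) (fun v => f v * ext0 S z v)]
  apply Finset.sum_congr rfl
  intro v _
  simp [ext0, v.2]

lemma wsum_single (f : W → ℝ) (u : W) (c : ℝ) : wsum f (Pi.single u c) = f u * c := by
  rw [wsum_apply]
  rw [Finset.sum_eq_single u]
  · simp
  · intro b _ hb; simp [Pi.single_apply, hb]
  · simp

end Helpers

section FamA

variable {W : Type*} [Fintype W] [DecidableEq W]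

/-- the matrix `J + diag d` -/
def famA (d : W → ℝ) : Matrix W W ℝ := fun v w => 1 + if v = w then d v else 0

lemma famA_row (d : W → ℝ) (x : W → ℝ) (v : W) :
    ∑ w, famA d v w * x w = (∑ w, x w) + d v * x v := by
  simp only [famA, add_mul, ite_mul, one_mul, zero_mul, Finset.sum_add_distrib]
  congr 1
  rw [Finset.sum_ite_eq (Finset.univ) v (fun w => d v * x w)]
  simp

lemma famA_mem_ker (d : W → ℝ) (x : W → ℝ) :
    x ∈ LinearMap.ker (famA d).mulVecLin ↔ ∀ v, (∑ w, x w) + d v * x v = 0 := by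
  rw [mem_ker_iff]
  exact forall_congr' fun v => by rw [famA_row]

/-- rank-nullity helper: nullity from a surjective map with equal kernel -/
lemma nullity_eq_of_surj {M : Type*} [AddCommGroup M] [Module ℝ M]
    [Module.Finite ℝ M] [Module.Free ℝ M]
    (A : Matrix W W ℝ) (T : (W → ℝ) →ₗ[ℝ] M)
    (hker : LinearMap.ker T = LinearMap.ker A.mulVecLin)
    (hsurj : Function.Surjective T) :
    nullity A + Module.finrank ℝ M = Fintype.card W := by
  have h := LinearMap.finrank_range_add_finrank_ker T
  rw [hker] at h
  rw [LinearMap.range_eq_top.mpr hsurj, finrank_top] at h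
  rw [Module.finrank_pi] at h
  unfold nullity
  omega

/-- L1 : nonempty zero-set S gives nullity |S| - 1 -/
lemma famA_nullity_card (d : W → ℝ) (S : Finset W) (hS : S.Nonempty)
    (hd : ∀ v, d v = 0 ↔ v ∈ S) :
    nullity (famA d) = S.card - 1 := by
  obtain ⟨s₀, hs₀⟩ := hS
  set T : (W → ℝ) →ₗ[ℝ] ({v // v ∉ S} → ℝ) × ℝ :=
    (LinearMap.funLeft ℝ ℝ (Subtype.val : {v // v ∉ S} → W)).prod (wsum 1) with hT
  have hker : LinearMap.ker T = LinearMap.ker (famA d).mulVecLin := by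
    ext x
    rw [famA_mem_ker]
    have hTx : ∀ y : W → ℝ, T y = 0 ↔ (∀ v : {v // v ∉ S}, y v.1 = 0) ∧ ∑ w, y w = 0 := by
      intro y
      rw [hT]
      constructor
      · intro hy
        have h1 := congrArg Prod.fst hy
        have h2 := congrArg Prod.snd hy
        simp only [LinearMap.prod_apply, Pi.prod] at h1 h2
        constructor
        · intro v; exact congrFun h1 v
        · simpa [wsum_apply] using h2
      · rintro ⟨h1, h2⟩
        refine Prod.ext (funext fun v => h1 v) ?_
        simpa [wsum_apply] using h2
    rw [LinearMap.mem_ker, hTx]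
    constructor
    · rintro ⟨h1, h2⟩ v
      by_cases hv : v ∈ S
      · rw [(hd v).mpr hv, h2]; ring
      · rw [h1 ⟨v, hv⟩, h2]; ring
    · intro h
      have hsum : ∑ w, x w = 0 := by
        have := h s₀
        rwa [(hd s₀).mpr hs₀, zero_mul, add_zero] at this
      refine ⟨fun v => ?_, hsum⟩
      have := h v.1
      rw [hsum, zero_add] at this
      have hdv : d v.1 ≠ 0 := fun h0 => v.2 ((hd v.1).mp h0)
      exact (mul_eq_zero.mp this).resolve_left hdv
  have hsurj : Function.Surjective T := by
    rintro ⟨z, c⟩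
    set xx : W → ℝ := ext0 S z + Pi.single s₀ (c - ∑ v : {v // v ∉ S}, z v) with hxx
    refine ⟨xx, ?_⟩
    have h1 : ∀ v : {v // v ∉ S}, xx v.1 = z v := by
      intro v
      have hvs : v.1 ≠ s₀ := fun h => v.2 (h ▸ hs₀)
      simp [hxx, ext0, v.2, Pi.single_apply, hvs]
    have h2 : wsum 1 xx = c := by
      rw [hxx]
      rw [map_add, wsum_single, Pi.one_apply, one_mul]
      have h3 := sum_mul_ext0 S z 1
      simp only [Pi.one_apply, one_mul] at h3
      rw [wsum_apply]
      simp only [Pi.one_apply, one_mul]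
      rw [h3]
      ring
    rw [hT]
    refine Prod.ext ?_ ?_
    · exact funext fun v => h1 v
    · exact h2
  have key := nullity_eq_of_surj (famA d) T hker hsurj
  rw [Module.finrank_prod, Module.finrank_pi, Module.finrank_self] at key
  have hcard : Fintype.card {v // v ∉ S} = Fintype.card W - S.card := by
    rw [Fintype.card_subtype_compl]
    congr 1
    exact Fintype.card_coe S
  have hle : S.card ≤ Fintype.card W := by
    simpa using Finset.card_le_univ S
  have hpos : 1 ≤ S.card := Finset.card_pos.mpr ⟨s₀, hs₀⟩
  omega

/-- L2 : no zeros on diagonal shift, sum of inverses ≠ -1 : invertible -/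
lemma famA_nullity_zero (d : W → ℝ) (hd : ∀ v, d v ≠ 0)
    (hsum : ∑ v, (d v)⁻¹ ≠ -1) : nullity (famA d) = 0 := by
  have hker : LinearMap.ker (famA d).mulVecLin = ⊥ := by
    ext x
    rw [famA_mem_ker, Submodule.mem_bot]
    constructor
    · intro h
      set s := ∑ w, x w with hs
      have hx : ∀ v, x v = -s * (d v)⁻¹ := by
        intro v
        have h2 : d v * x v = -s := by linarith [h v]
        calc x v = (d v)⁻¹ * (d v * x v) := by rw [inv_mul_cancel_left₀ (hd v)]
        _ = (d v)⁻¹ * (-s) := by rw [h2]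
        _ = -s * (d v)⁻¹ := by ring
      have hss : s = -s * ∑ v, (d v)⁻¹ := by
        rw [hs]
        nth_rewrite 1 [Finset.sum_congr rfl fun v _ => hx v]
        rw [← Finset.mul_sum]
      have hs0 : s = 0 := by
        have hmul : s * (1 + ∑ v, (d v)⁻¹) = 0 := by ring_nf; linarith [hss]
        rcases mul_eq_zero.mp hmul with h0 | h0
        · exact h0
        · exact absurd (by linarith : ∑ v, (d v)⁻¹ = -1) hsum
      funext v
      rw [hx v, hs0]
      simp
    · rintro rfl; intro v; simp
  unfold nullity
  rw [hker, finrank_bot]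

/-- L3 : no zeros, sum of inverses = -1 : nullity 1 -/
lemma famA_nullity_one [Nonempty W] (d : W → ℝ) (hd : ∀ v, d v ≠ 0)
    (hsum : ∑ v, (d v)⁻¹ = -1) : nullity (famA d) = 1 := by
  have hker : LinearMap.ker (famA d).mulVecLin = Submodule.span ℝ {fun v => (d v)⁻¹} := by
    ext x
    rw [famA_mem_ker, Submodule.mem_span_singleton]
    constructor
    · intro h
      set s := ∑ w, x w with hs
      refine ⟨-s, funext fun v => ?_⟩
      have := h v
      have hdv := hd v
      simp only [Pi.smul_apply, smul_eq_mul]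
      field_simp
      linarith
    · rintro ⟨a, rfl⟩ v
      simp only [Pi.smul_apply, smul_eq_mul]
      rw [← Finset.mul_sum, hsum]
      have hc : d v * (a * (d v)⁻¹) = a := by
        rw [mul_comm a, ← mul_assoc, mul_inv_cancel₀ (hd v), one_mul]
      rw [hc]; ring
  unfold nullity
  rw [hker, finrank_span_singleton]
  intro h0
  obtain ⟨v⟩ := ‹Nonempty W›
  have := congrFun h0 v
  simp only [Pi.zero_apply] at this
  exact hd v (inv_eq_zero.mp this)

end FamA

section FamB

variable {W : Type*} [Fintype W] [DecidableEq W]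

/-- bordered family: row/column `i` is `b`, rest is `J + diag d` -/
def famB (i : W) (b d : W → ℝ) : Matrix W W ℝ :=
  fun v w => if v = i then b w else if w = i then b v else (1 + if v = w then d v else 0)

lemma famB_row_i (i : W) (b d : W → ℝ) (x : W → ℝ) :
    ∑ w, famB i b d i w * x w = ∑ w, b w * x w := by
  apply Finset.sum_congr rfl
  intro w _
  simp [famB]

lemma famB_row (i : W) (b d : W → ℝ) (x : W → ℝ) (v : W) (hv : v ≠ i) :
    ∑ w, famB i b d v w * x w =
      b v * x i + ((∑ w ∈ Finset.univ.erase i, x w) + d v * x v) := by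
  rw [← Finset.sum_erase_add Finset.univ _ (Finset.mem_univ i)]
  have hterm : famB i b d v i * x i = b v * x i := by simp [famB, hv]
  rw [hterm, add_comm]
  congr 1
  have : ∀ w ∈ Finset.univ.erase i, famB i b d v w * x w = x w + (if v = w then d v else 0) * x w := by
    intro w hw
    have hwi : w ≠ i := Finset.ne_of_mem_erase hw
    simp [famB, hv, hwi, add_mul]
  rw [Finset.sum_congr rfl this, Finset.sum_add_distrib]
  congr 1
  simp only [ite_mul, zero_mul]
  rw [Finset.sum_ite_eq (Finset.univ.erase i) v (fun w => d v * x w)]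
  simp [hv]

/-- L4: bordered matrix nullity |S| - 2 -/
lemma famB_nullity (i : W) (b d : W → ℝ) (S : Finset W) (hiS : i ∉ S)
    (u₀ u₁ : W) (hu₀ : u₀ ∈ S) (hu₁ : u₁ ∈ S) (hne : u₀ ≠ u₁)
    (hb₀ : b u₀ = 1) (hb₁ : b u₁ = 2)
    (hd : ∀ v, v ≠ i → (d v = 0 ↔ v ∈ S)) :
    nullity (famB i b d) = S.card - 2 := by
  have hu₀i : u₀ ≠ i := fun h => hiS (h ▸ hu₀)
  have hu₁i : u₁ ≠ i := fun h => hiS (h ▸ hu₁)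
  set T : (W → ℝ) →ₗ[ℝ] ({v // v ∉ S} → ℝ) × (ℝ × ℝ) :=
    (LinearMap.funLeft ℝ ℝ (Subtype.val : {v // v ∉ S} → W)).prod ((wsum 1).prod (wsum b)) with hT
  have hTx : ∀ y : W → ℝ, T y = 0 ↔
      (∀ v : {v // v ∉ S}, y v.1 = 0) ∧ (∑ w, y w = 0 ∧ ∑ w, b w * y w = 0) := by
    intro y
    rw [hT]
    constructor
    · intro hy
      have h1 := congrArg Prod.fst hy
      have h2 := congrArg (fun p => p.2.1) hy
      have h3 := congrArg (fun p => p.2.2) hy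
      simp only [LinearMap.prod_apply, Pi.prod] at h1 h2 h3
      refine ⟨fun v => congrFun h1 v, ?_, ?_⟩
      · simpa [wsum_apply] using h2
      · simpa [wsum_apply] using h3
    · rintro ⟨h1, h2, h3⟩
      refine Prod.ext (funext fun v => h1 v) (Prod.ext ?_ ?_)
      · simpa [wsum_apply] using h2
      · simpa [wsum_apply] using h3
  have hker : LinearMap.ker T = LinearMap.ker (famB i b d).mulVecLin := by
    ext x
    rw [LinearMap.mem_ker, hTx, mem_ker_iff]
    constructor
    · rintro ⟨h1, h2, h3⟩ v
      have hxi : x i = 0 := h1 ⟨i, hiS⟩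
      have hsum' : ∑ w ∈ Finset.univ.erase i, x w = 0 := by
        have h4 := Finset.sum_erase_add Finset.univ x (Finset.mem_univ i)
        rw [hxi, add_zero] at h4
        rw [h4]; exact h2
      by_cases hv : v = i
      · subst hv
        rw [famB_row_i]
        simpa [wsum_apply] using h3
      · rw [famB_row i b d x v hv, hxi, hsum']
        have hxv : d v * x v = 0 := by
          by_cases hvS : v ∈ S
          · rw [(hd v hv).mpr hvS]; ring
          · rw [h1 ⟨v, hvS⟩]; ring
        rw [hxv]; ring
    · intro h
      -- rows u₀ and u₁ give x i = 0 and erase-sum = 0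
      have e₀ := h u₀
      have e₁ := h u₁
      rw [famB_row i b d x u₀ hu₀i, (hd u₀ hu₀i).mpr hu₀, hb₀] at e₀
      rw [famB_row i b d x u₁ hu₁i, (hd u₁ hu₁i).mpr hu₁, hb₁] at e₁
      simp only [zero_mul, add_zero] at e₀ e₁
      have hxi : x i = 0 := by linarith
      have hs' : ∑ w ∈ Finset.univ.erase i, x w = 0 := by linarith
      have h1 : ∀ v : {v // v ∉ S}, x v.1 = 0 := by
        rintro ⟨v, hvS⟩
        by_cases hvi : v = i
        · simpa [hvi] using hxi
        · have := h v
          rw [famB_row i b d x v hvi, hxi, hs'] at this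
          have hdv : d v ≠ 0 := fun h0 => hvS ((hd v hvi).mp h0)
          have : d v * x v = 0 := by linarith
          exact (mul_eq_zero.mp this).resolve_left hdv
      refine ⟨h1, ?_, ?_⟩
      · rw [← Finset.sum_erase_add Finset.univ x (Finset.mem_univ i), hxi, hs']; ring
      · have := h i
        rwa [famB_row_i] at this
  have hsurj : Function.Surjective T := by
    rintro ⟨z, c₁, c₂⟩
    set Z : ℝ := ∑ v : {v // v ∉ S}, z v with hZ
    set Zb : ℝ := ∑ v : {v // v ∉ S}, b v.1 * z v with hZb
    set α : ℝ := 2 * (c₁ - Z) - (c₂ - Zb) with hα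
    set β : ℝ := (c₂ - Zb) - (c₁ - Z) with hβ
    set xx : W → ℝ := ext0 S z + Pi.single u₀ α + Pi.single u₁ β with hxx
    refine ⟨xx, ?_⟩
    have h1 : ∀ v : {v // v ∉ S}, xx v.1 = z v := by
      intro v
      have hv₀ : v.1 ≠ u₀ := fun h => v.2 (h ▸ hu₀)
      have hv₁ : v.1 ≠ u₁ := fun h => v.2 (h ▸ hu₁)
      simp [hxx, ext0, v.2, Pi.single_apply, hv₀, hv₁]
    have h2 : wsum 1 xx = c₁ := by
      rw [hxx, map_add, map_add, wsum_single, wsum_single, Pi.one_apply, Pi.one_apply]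
      have h3 := sum_mul_ext0 S z 1
      simp only [Pi.one_apply, one_mul] at h3
      rw [wsum_apply]
      simp only [Pi.one_apply, one_mul]
      rw [h3, ← hZ, hα, hβ]
      ring
    have h2b : wsum b xx = c₂ := by
      rw [hxx, map_add, map_add, wsum_single, wsum_single, hb₀, hb₁]
      rw [wsum_apply, sum_mul_ext0 S z b, ← hZb, hα, hβ]
      ring
    rw [hT]
    refine Prod.ext (funext fun v => h1 v) (Prod.ext ?_ ?_)
    · simpa using h2
    · simpa using h2b
  have key := nullity_eq_of_surj (famB i b d) T hker hsurj
  rw [Module.finrank_prod, Module.finrank_prod, Module.finrank_pi, Module.finrank_self] at key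
  have hcard : Fintype.card {v // v ∉ S} = Fintype.card W - S.card := by
    rw [Fintype.card_subtype_compl]
    congr 1
    exact Fintype.card_coe S
  have hle : S.card ≤ Fintype.card W := by simpa using Finset.card_le_univ S
  have hpos : 2 ≤ S.card := Finset.one_lt_card.mpr ⟨u₀, hu₀, u₁, hu₁, hne⟩
  omega

end FamB

section Interlace

variable {W : Type*} [Fintype W] [DecidableEq W]

lemma sum_subtype_ne (i : W) (f : W → ℝ) :
    ∑ w : {v : W // v ≠ i}, f w.1 = ∑ w ∈ Finset.univ.erase i, f w := by
  rw [Finset.sum_subtype (p := fun v => v ≠ i) (Finset.univ.erase i) (by simp) f]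

/-- extension by zero at `i` -/
def extZ (i : W) : ({v : W // v ≠ i} → ℝ) →ₗ[ℝ] (W → ℝ) where
  toFun y := fun v => if h : v ≠ i then y ⟨v, h⟩ else 0
  map_add' y z := funext fun v => by
    by_cases h : v ≠ i
    · simp [h]
    · have hv : v = i := not_not.mp h
      subst hv; simp
  map_smul' c y := funext fun v => by
    by_cases h : v ≠ i
    · simp [h]
    · have hv : v = i := not_not.mp h
      subst hv; simp

lemma finrank_le_ker_functional (U : Submodule ℝ (W → ℝ)) (φ : (W → ℝ) →ₗ[ℝ] ℝ) :
    Module.finrank ℝ U ≤ Module.finrank ℝ (LinearMap.ker (φ.comp U.subtype)) + 1 := by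
  have h := LinearMap.finrank_range_add_finrank_ker (φ.comp U.subtype)
  have h2 : Module.finrank ℝ (LinearMap.range (φ.comp U.subtype)) ≤ 1 := by
    have := Submodule.finrank_le (LinearMap.range (φ.comp U.subtype))
    simpa [Module.finrank_self] using this
  omega

lemma finrank_le_ker_functional' {M : Type*} [AddCommGroup M] [Module ℝ M]
    [FiniteDimensional ℝ M] (U : Submodule ℝ M) (φ : M →ₗ[ℝ] ℝ) :
    Module.finrank ℝ U ≤ Module.finrank ℝ (LinearMap.ker (φ.comp U.subtype)) + 1 := by
  have h := LinearMap.finrank_range_add_finrank_ker (φ.comp U.subtype)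
  have h2 : Module.finrank ℝ (LinearMap.range (φ.comp U.subtype)) ≤ 1 := by
    have := Submodule.finrank_le (LinearMap.range (φ.comp U.subtype))
    simpa [Module.finrank_self] using this
  omega

lemma interlace1 (A : Matrix W W ℝ) (i : W) :
    nullity A ≤ nullity (deleteRC A i) + 1 := by
  classical
  set U := LinearMap.ker A.mulVecLin with hU
  set φ : (W → ℝ) →ₗ[ℝ] ℝ := LinearMap.proj i with hφ
  set K := LinearMap.ker (φ.comp U.subtype) with hK
  have hmap : ∀ u : K, (LinearMap.funLeft ℝ ℝ (Subtype.val : {v : W // v ≠ i} → W))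
      ((u : U) : W → ℝ) ∈ LinearMap.ker (deleteRC A i).mulVecLin := by
    intro u
    set x : W → ℝ := ((u : U) : W → ℝ) with hx
    have hxi : x i = 0 := u.2
    have hxker : ∀ v, ∑ w, A v w * x w = 0 := (mem_ker_iff A x).mp (u : U).2
    rw [mem_ker_iff]
    intro v
    have : ∑ w : {v : W // v ≠ i}, A v.1 w.1 * x w.1 = ∑ w ∈ Finset.univ.erase i, A v.1 w * x w :=
      sum_subtype_ne i (fun w => A v.1 w * x w)
    calc ∑ w : {v : W // v ≠ i}, deleteRC A i v w * (x ∘ Subtype.val) w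
        = ∑ w ∈ Finset.univ.erase i, A v.1 w * x w := by
          rw [← this]; rfl
      _ = ∑ w, A v.1 w * x w := by
          rw [← Finset.sum_erase_add Finset.univ _ (Finset.mem_univ i), hxi, mul_zero, add_zero]
      _ = 0 := hxker v.1
  set f : K →ₗ[ℝ] (LinearMap.ker (deleteRC A i).mulVecLin) :=
    LinearMap.codRestrict _ ((LinearMap.funLeft ℝ ℝ Subtype.val).comp (U.subtype.comp K.subtype)) hmap with hf
  have hinj : Function.Injective f := by
    intro u v huv
    have hval : ∀ w : {v : W // v ≠ i}, ((u : U) : W → ℝ) w.1 = ((v : U) : W → ℝ) w.1 := by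
      intro w
      have := congrFun (congrArg Subtype.val huv) w
      exact this
    apply Subtype.ext; apply Subtype.ext
    funext w
    by_cases hw : w = i
    · have h1 : ((u : U) : W → ℝ) i = 0 := u.2
      have h2 : ((v : U) : W → ℝ) i = 0 := v.2
      rw [hw, h1, h2]
    · exact hval ⟨w, hw⟩
  have h1 : nullity A ≤ Module.finrank ℝ K + 1 := finrank_le_ker_functional U φ
  have h2 : Module.finrank ℝ K ≤ nullity (deleteRC A i) :=
    LinearMap.finrank_le_finrank_of_injective hinj
  omega

lemma interlace2 (A : Matrix W W ℝ) (i : W) :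
    nullity (deleteRC A i) ≤ nullity A + 1 := by
  classical
  set U := LinearMap.ker (deleteRC A i).mulVecLin with hU
  set φ : ({v : W // v ≠ i} → ℝ) →ₗ[ℝ] ℝ := wsum (fun v => A i v.1) with hφ
  set K := LinearMap.ker (φ.comp U.subtype) with hK
  have hmap : ∀ u : K, extZ i ((u : U) : {v : W // v ≠ i} → ℝ) ∈ LinearMap.ker A.mulVecLin := by
    intro u
    set y : {v : W // v ≠ i} → ℝ := ((u : U) : {v : W // v ≠ i} → ℝ) with hy
    have hyker : ∀ v : {v : W // v ≠ i},
        ∑ w : {v : W // v ≠ i}, A v.1 w.1 * y w = 0 := by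
      have := (mem_ker_iff (deleteRC A i) y).mp (u : U).2
      exact this
    have hφy : ∑ w : {v : W // v ≠ i}, A i w.1 * y w = 0 := u.2
    rw [mem_ker_iff]
    intro v
    have hxw : ∀ w : {v : W // v ≠ i}, extZ i y w.1 = y w := by
      intro w; simp [extZ, w.2]
    have hxi : extZ i y i = 0 := by simp [extZ]
    have hsplit : ∑ w, A v w * extZ i y w = ∑ w : {v : W // v ≠ i}, A v w.1 * y w := by
      rw [← Finset.sum_erase_add Finset.univ _ (Finset.mem_univ i), hxi, mul_zero, add_zero]
      rw [← sum_subtype_ne i (fun w => A v w * extZ i y w)]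
      exact Finset.sum_congr rfl fun w _ => by rw [hxw w]
    rw [hsplit]
    by_cases hv : v = i
    · subst hv; exact hφy
    · exact hyker ⟨v, hv⟩
  set f : K →ₗ[ℝ] (LinearMap.ker A.mulVecLin) :=
    LinearMap.codRestrict _ ((extZ i).comp (U.subtype.comp K.subtype)) hmap with hf
  have hinj : Function.Injective f := by
    intro u v huv
    apply Subtype.ext; apply Subtype.ext
    funext w
    have := congrFun (congrArg Subtype.val huv) w.1
    simpa [hf, LinearMap.codRestrict_apply, extZ, w.2] using this
  have h1 : nullity (deleteRC A i) ≤ Module.finrank ℝ K + 1 := finrank_le_ker_functional' U φ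
  have h2 : Module.finrank ℝ K ≤ nullity A := LinearMap.finrank_le_finrank_of_injective hinj
  omega

lemma nullity_le_card (A : Matrix W W ℝ) : nullity A ≤ Fintype.card W := by
  have := Submodule.finrank_le (LinearMap.ker A.mulVecLin)
  rwa [Module.finrank_pi] at this

lemma eq_zero_of_nullity_card (A : Matrix W W ℝ) (h : nullity A = Fintype.card W) :
    A = 0 := by
  have hker : LinearMap.ker A.mulVecLin = ⊤ := by
    apply Submodule.eq_top_of_finrank_eq
    rw [Module.finrank_pi]
    exact h
  ext v w
  have hmem : (Pi.single w 1 : W → ℝ) ∈ LinearMap.ker A.mulVecLin := hker ▸ Submodule.mem_top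
  have := (mem_ker_iff A _).mp hmem v
  rw [Finset.sum_eq_single w (fun b _ hb => by simp [Pi.single_apply, hb]) (by simp)] at this
  simpa using this

end Interlace

section SG

variable {W : Type*} [Fintype W] [DecidableEq W]

lemma snip_of_complete (A : Matrix W W ℝ)
    (hA : InSG (⊤ : SimpleGraph W) A) (i : W) : HasSNIP A i := by
  intro X _ hAX hIX _
  ext u v
  by_cases huv : u = v
  · subst huv
    have := congrFun (congrFun hIX u) u
    simpa [Matrix.hadamard] using this
  · have h1 := congrFun (congrFun hAX u) v
    simp only [Matrix.hadamard_apply, Matrix.zero_apply] at h1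
    have h2 : A u v ≠ 0 := (hA.2 u v huv).mpr (by simp [huv])
    have h3 := (mul_eq_zero.mp h1).resolve_left h2
    simp [h3]

lemma famA_inSG (d : W → ℝ) : InSG (⊤ : SimpleGraph W) (famA d) := by
  constructor
  · ext v w
    simp only [Matrix.transpose_apply, famA]
    by_cases h : v = w
    · subst h; rfl
    · rw [if_neg h, if_neg (Ne.symm h)]
  · intro u v huv
    have : famA d u v = 1 := by simp [famA, huv]
    rw [this]
    simp [huv]

lemma famB_inSG (i : W) (b d : W → ℝ) (hb : ∀ v, b v ≠ 0) :
    InSG (⊤ : SimpleGraph W) (famB i b d) := by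
  constructor
  · ext v w
    simp only [Matrix.transpose_apply, famB]
    by_cases hv : v = i <;> by_cases hw : w = i
    · subst hv; subst hw; rfl
    · rw [if_neg hw, if_pos hv, if_pos hv]
    · rw [if_pos hw, if_neg hv, if_pos hw]
    · rw [if_neg hw, if_neg hv, if_neg hv, if_neg hw]
      by_cases h : v = w
      · subst h; rfl
      · rw [if_neg h, if_neg (Ne.symm h)]
  · intro u v huv
    have : famB i b d u v ≠ 0 := by
      by_cases hu : u = i
      · simpa [famB, hu] using hb v
      · by_cases hv : v = i
        · simp only [famB, if_neg hu, if_pos hv]; exact hb u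
        · simp [famB, hu, hv, huv]
    simpa [huv] using this

lemma deleteRC_famA (d : W → ℝ) (i : W) :
    deleteRC (famA d) i = famA (fun v : {v : W // v ≠ i} => d v.1) := by
  ext v w
  show famA d v.1 w.1 = _
  simp only [famA]
  by_cases h : v = w
  · subst h; simp
  · rw [if_neg h, if_neg (fun hc => h (Subtype.ext hc))]

lemma deleteRC_famB (i : W) (b d : W → ℝ) :
    deleteRC (famB i b d) i = famA (fun v : {v : W // v ≠ i} => d v.1) := by
  ext v w
  show famB i b d v.1 w.1 = _
  simp only [famB, famA, if_neg v.2, if_neg w.2]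
  by_cases h : v = w
  · subst h; simp
  · rw [if_neg (fun hc => h (Subtype.ext hc)), if_neg h]

end SG

/-- for `n ≥ 2`, every matrix in `𝒮(K_n)` has the `i`-SNIP, and `(K_n,i)`
allows `(k,l)` with the SNIP iff `|k − l| ≤ 1` and `l ≤ n − 2`, or `(k,l) = (0,1)`. -/
theorem stmt11 {n : ℕ} (hn : 2 ≤ n) (i : Fin n) :
    (∀ A : Matrix (Fin n) (Fin n) ℝ, InSG (⊤ : SimpleGraph (Fin n)) A → HasSNIP A i) ∧
    (∀ k l : ℕ, AllowsSNIP (⊤ : SimpleGraph (Fin n)) i k l ↔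
      ((k ≤ l + 1 ∧ l ≤ k + 1 ∧ l + 2 ≤ n) ∨ (k = 0 ∧ l = 1))) := by
  have hcard : Fintype.card (Fin n) = n := Fintype.card_fin n
  have hcard' : Fintype.card {v : Fin n // v ≠ i} = n - 1 := by
    rw [Fintype.card_subtype]
    rw [show Finset.univ.filter (fun v : Fin n => v ≠ i) = Finset.univ.erase i from
      Finset.filter_ne' _ _]
    rw [Finset.card_erase_of_mem (Finset.mem_univ i), Finset.card_univ, hcard]
  refine ⟨fun A hA => snip_of_complete A hA i, fun k l => ⟨?_, ?_⟩⟩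
  · -- necessity
    rintro ⟨A, hA, hk, hl, -⟩
    have hkl1 : k ≤ l + 1 := by rw [← hk, ← hl]; exact interlace1 A i
    have hkl2 : l ≤ k + 1 := by rw [← hk, ← hl]; exact interlace2 A i
    by_cases hln : l + 2 ≤ n
    · exact Or.inl ⟨hkl1, hkl2, hln⟩
    · right
      have hle : l ≤ n - 1 := by
        rw [← hl]
        have := nullity_le_card (deleteRC A i)
        rwa [hcard'] at this
      have hleq : l = n - 1 := by omega
      have hzero : deleteRC A i = 0 := by
        apply eq_zero_of_nullity_card
        rw [hl, hcard', hleq]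
      have hn2 : n = 2 := by
        by_contra hne2
        have h3 : 3 ≤ n := by omega
        have hlt : 1 < Fintype.card {v : Fin n // v ≠ i} := by omega
        obtain ⟨u, v, huv⟩ := Fintype.exists_pair_of_one_lt_card hlt
        have hne' : u.1 ≠ v.1 := fun h => huv (Subtype.ext h)
        have hadj : A u.1 v.1 ≠ 0 := (hA.2 u.1 v.1 hne').mpr (by simp [hne'])
        have h0 : deleteRC A i u v = A u.1 v.1 := rfl
        rw [hzero] at h0
        exact hadj h0.symm
      have hl1 : l = 1 := by omega
      obtain ⟨u⟩ : Nonempty {v : Fin n // v ≠ i} := by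
        rw [← Fintype.card_pos_iff]; omega
      have hsub : Subsingleton {v : Fin n // v ≠ i} :=
        Fintype.card_le_one_iff_subsingleton.mp (by omega)
      have huniq : ∀ w : Fin n, w = i ∨ w = u.1 := by
        intro w
        by_cases hw : w = i
        · exact Or.inl hw
        · exact Or.inr (congrArg Subtype.val (Subsingleton.elim (⟨w, hw⟩ : {v : Fin n // v ≠ i}) u))
      have hAuu : A u.1 u.1 = 0 := by
        have h0 : deleteRC A i u u = A u.1 u.1 := rfl
        rw [hzero] at h0
        exact h0.symm
      have hiu : i ≠ u.1 := Ne.symm u.2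
      have hAui : A u.1 i ≠ 0 := (hA.2 u.1 i u.2).mpr (by simp [u.2])
      have hAiu : A i u.1 ≠ 0 := (hA.2 i u.1 hiu).mpr (by simp [hiu])
      have huniv : (Finset.univ : Finset (Fin n)) = {i, u.1} := by
        apply (Finset.eq_of_subset_of_card_le (Finset.subset_univ _) _).symm
        rw [Finset.card_insert_of_notMem (by simp [hiu]), Finset.card_singleton,
          Finset.card_univ, hcard, hn2]
      have hker : LinearMap.ker A.mulVecLin = ⊥ := by
        ext x
        rw [mem_ker_iff, Submodule.mem_bot]
        constructor
        · intro h
          have hrowu := h u.1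
          rw [huniv, Finset.sum_pair hiu, hAuu, zero_mul, add_zero] at hrowu
          have hxi : x i = 0 := (mul_eq_zero.mp hrowu).resolve_left hAui
          have hrowi := h i
          rw [huniv, Finset.sum_pair hiu, hxi, mul_zero, zero_add] at hrowi
          have hxu : x u.1 = 0 := (mul_eq_zero.mp hrowi).resolve_left hAiu
          funext w
          rcases huniq w with hw | hw
          · rw [hw, hxi]; rfl
          · rw [hw, hxu]; rfl
        · rintro rfl
          intro v; simp
      have hk0 : k = 0 := by
        rw [← hk]
        unfold nullity
        rw [hker, finrank_bot]
      exact ⟨hk0, hl1⟩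
  · -- sufficiency
    intro h
    rcases h with ⟨h1, h2, h3⟩ | ⟨hk0, hl1⟩
    · -- main case: l + 2 ≤ n, |k - l| ≤ 1
      have hcases : k = l + 1 ∨ k = l ∨ k + 1 = l := by omega
      rcases hcases with hc | hc | hc
      · -- k = l + 1 : S containing i, card l + 2
        obtain ⟨S, hiS, hScard⟩ :=
          Finset.exists_superset_card_eq (s := {i}) (n := l + 2) (by simp)
            (by rw [hcard]; exact h3)
        have hiS' : i ∈ S := hiS (Finset.mem_singleton_self i)
        set d : Fin n → ℝ := fun v => if v ∈ S then 0 else 1 with hd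
        have hdiff : ∀ v, d v = 0 ↔ v ∈ S := by
          intro v; by_cases hv : v ∈ S <;> simp [hd, hv]
        refine ⟨famA d, famA_inSG d, ?_, ?_, snip_of_complete _ (famA_inSG d) i⟩
        · rw [famA_nullity_card d S ⟨i, hiS'⟩ hdiff, hScard, hc]
          omega
        · rw [deleteRC_famA]
          set S' : Finset {v : Fin n // v ≠ i} := S.subtype _ with hS'
          have hS'card : S'.card = l + 1 := by
            rw [hS', Finset.card_subtype, Finset.filter_ne', Finset.card_erase_of_mem hiS', hScard]
            omega
          have hS'ne : S'.Nonempty := Finset.card_pos.mp (by omega)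
          have hdiff' : ∀ v : {v : Fin n // v ≠ i}, d v.1 = 0 ↔ v ∈ S' := by
            intro v
            rw [hdiff v.1, hS', Finset.mem_subtype]
          rw [famA_nullity_card _ S' hS'ne hdiff', hS'card]
          omega
      · -- k = l : S avoiding i, card l + 1
        obtain ⟨S, hSsub, hScard⟩ :=
          Finset.exists_subset_card_eq (s := Finset.univ.erase i) (n := l + 1)
            (by rw [Finset.card_erase_of_mem (Finset.mem_univ i), Finset.card_univ, hcard]; omega)
        have hiS : i ∉ S := fun hmem => (Finset.mem_erase.mp (hSsub hmem)).1 rfl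
        have hSne : S.Nonempty := Finset.card_pos.mp (by omega)
        set d : Fin n → ℝ := fun v => if v ∈ S then 0 else 1 with hd
        have hdiff : ∀ v, d v = 0 ↔ v ∈ S := by
          intro v; by_cases hv : v ∈ S <;> simp [hd, hv]
        refine ⟨famA d, famA_inSG d, ?_, ?_, snip_of_complete _ (famA_inSG d) i⟩
        · rw [famA_nullity_card d S hSne hdiff, hScard, hc]; omega
        · rw [deleteRC_famA]
          set S' : Finset {v : Fin n // v ≠ i} := S.subtype _ with hS'
          have hfilt : S.filter (· ≠ i) = S := by
            apply Finset.filter_true_of_mem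
            intro v hv
            exact (Finset.mem_erase.mp (hSsub hv)).1
          have hS'card : S'.card = l + 1 := by
            rw [hS', Finset.card_subtype, hfilt, hScard]
          have hS'ne : S'.Nonempty := Finset.card_pos.mp (by omega)
          have hdiff' : ∀ v : {v : Fin n // v ≠ i}, d v.1 = 0 ↔ v ∈ S' := by
            intro v
            rw [hdiff v.1, hS', Finset.mem_subtype]
          rw [famA_nullity_card _ S' hS'ne hdiff', hS'card]
          omega
      · -- k + 1 = l : bordered family, S avoiding i, card l + 1 ≥ 2
        obtain ⟨S, hSsub, hScard⟩ :=
          Finset.exists_subset_card_eq (s := Finset.univ.erase i) (n := l + 1)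
            (by rw [Finset.card_erase_of_mem (Finset.mem_univ i), Finset.card_univ, hcard]; omega)
        have hiS : i ∉ S := fun hmem => (Finset.mem_erase.mp (hSsub hmem)).1 rfl
        have hS2 : 1 < S.card := by omega
        obtain ⟨u₀, hu₀, u₁, hu₁, hne⟩ := Finset.one_lt_card.mp hS2
        set b : Fin n → ℝ := fun v => if v = u₁ then 2 else 1 with hb
        have hbne : ∀ v, b v ≠ 0 := by
          intro v; by_cases hv : v = u₁ <;> simp [hb, hv]
        set d : Fin n → ℝ := fun v => if v ∈ S then 0 else 1 with hd
        have hdiff : ∀ v, v ≠ i → (d v = 0 ↔ v ∈ S) := by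
          intro v _; by_cases hv : v ∈ S <;> simp [hd, hv]
        refine ⟨famB i b d, famB_inSG i b d hbne, ?_, ?_,
          snip_of_complete _ (famB_inSG i b d hbne) i⟩
        · rw [famB_nullity i b d S hiS u₀ u₁ hu₀ hu₁ hne (by simp [hb, hne]) (by simp [hb]) hdiff,
            hScard]
          omega
        · rw [deleteRC_famB]
          set S' : Finset {v : Fin n // v ≠ i} := S.subtype _ with hS'
          have hfilt : S.filter (· ≠ i) = S := by
            apply Finset.filter_true_of_mem
            intro v hv
            exact (Finset.mem_erase.mp (hSsub hv)).1
          have hS'card : S'.card = l + 1 := by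
            rw [hS', Finset.card_subtype, hfilt, hScard]
          have hS'ne : S'.Nonempty := Finset.card_pos.mp (by omega)
          have hdiff' : ∀ v : {v : Fin n // v ≠ i}, d v.1 = 0 ↔ v ∈ S' := by
            intro v
            rw [hdiff v.1 v.2, hS', Finset.mem_subtype]
          rw [famA_nullity_card _ S' hS'ne hdiff', hS'card]
          omega
    · -- (k, l) = (0, 1)
      subst hk0; subst hl1
      have hm : (1:ℝ) ≤ (n - 1 : ℕ) := by
        have : 1 ≤ n - 1 := by omega
        exact_mod_cast this
      have hmne : ((n - 1 : ℕ) : ℝ) ≠ 0 := by linarith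
      set d : Fin n → ℝ := fun v => if v = i then 0 else -((n - 1 : ℕ) : ℝ) with hd
      have hdiff : ∀ v, d v = 0 ↔ v ∈ ({i} : Finset (Fin n)) := by
        intro v
        by_cases hv : v = i <;> simp [hd, hv, hmne]
      refine ⟨famA d, famA_inSG d, ?_, ?_, snip_of_complete _ (famA_inSG d) i⟩
      · rw [famA_nullity_card d {i} ⟨i, Finset.mem_singleton_self i⟩ hdiff]
        simp
      · rw [deleteRC_famA]
        have : Nonempty {v : Fin n // v ≠ i} := by
          rw [← Fintype.card_pos_iff]; omega
        apply famA_nullity_one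
        · intro v
          simp only [hd, if_neg v.2]
          intro hc
          rw [neg_eq_zero] at hc
          exact hmne hc
        · have heq : ∀ v : {v : Fin n // v ≠ i}, (d v.1)⁻¹ = -((n - 1 : ℕ) : ℝ)⁻¹ := by
            intro v
            rw [show d v.1 = -((n - 1 : ℕ) : ℝ) from by simp [hd, v.2], inv_neg]
          rw [Finset.sum_congr rfl fun v _ => heq v, Finset.sum_const, Finset.card_univ, hcard']
          rw [nsmul_eq_mul, mul_neg, mul_inv_cancel₀ hmne]
end
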